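/- arXiv:1612.06816 — 9 statements merged into one kernel-verified Lean document; each statement's English description precedes it below -/
import Mathlib

section
/- If c' is obtained from c by firing at vertex j, then for every ℓ ∈ Z, the statistic φ_ℓ(c') := Σ_{i ≤ ℓ} (i - ℓ - 1)·c'(i) equals φ_ℓ(c) - 1 if j = ℓ + 1, and equals φ_ℓ(c) otherwise. -/
/-- `c'` is obtained from `c` by firing at vertex `j`. -/
def FireAt (c : ℤ → ℕ) (j : ℤ) (c' : ℤ → ℕ) : Prop :=
  2 ≤ c j ∧ c' (j - 1) = c (j - 1) + 1 ∧ c' (j + 1) = c (j + 1) + 1 ∧ c' j = c j - 2 ∧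
    ∀ i : ℤ, i ≠ j - 1 → i ≠ j → i ≠ j + 1 → c' i = c i

/-- a single chip-firing move -/
def Step (c c' : ℤ → ℕ) : Prop := ∃ j, FireAt c j c'

/-- reachability by a (possibly empty) sequence of firings -/
def Reaches : (ℤ → ℕ) → (ℤ → ℕ) → Prop := Relation.ReflTransGen Step

/-- a configuration is stable if no vertex has two chips -/
def Stable (c : ℤ → ℕ) : Prop := ∀ i : ℤ, c i ≤ 1

theorem stmt_2 (c c' : ℤ → ℕ) (hc : (Function.support c).Finite) (j : ℤ)
    (h : FireAt c j c') (ℓ : ℤ) :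
    (∑ᶠ i ∈ {i : ℤ | i ≤ ℓ}, (i - ℓ - 1) * (c' i : ℤ)) =
      if j = ℓ + 1 then (∑ᶠ i ∈ {i : ℤ | i ≤ ℓ}, (i - ℓ - 1) * (c i : ℤ)) - 1
      else ∑ᶠ i ∈ {i : ℤ | i ≤ ℓ}, (i - ℓ - 1) * (c i : ℤ) := by
  classical
  obtain ⟨h2, hm, hp, hj, hoth⟩ := h
  set F : Finset ℤ := (hc.toFinset ∪ {j - 1, j, j + 1}).filter (· ≤ ℓ) with hF
  have hcF : (∑ᶠ i ∈ {i : ℤ | i ≤ ℓ}, (i - ℓ - 1) * (c i : ℤ)) =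
      ∑ i ∈ F, (i - ℓ - 1) * (c i : ℤ) := by
    apply finsum_mem_eq_sum_of_inter_support_eq
    ext i
    simp only [Set.mem_inter_iff, Set.mem_setOf_eq, Function.mem_support, Finset.coe_filter,
      Finset.mem_union, Finset.mem_insert, Finset.mem_singleton, Set.Finite.mem_toFinset,
      Set.mem_setOf_eq, hF]
    constructor
    · rintro ⟨hi, hne⟩
      have : c i ≠ 0 := by
        intro h0; apply hne; simp [h0]
      exact ⟨⟨Or.inl this, hi⟩, hne⟩
    · rintro ⟨⟨_, hi⟩, hne⟩; exact ⟨hi, hne⟩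
  have hc'F : (∑ᶠ i ∈ {i : ℤ | i ≤ ℓ}, (i - ℓ - 1) * (c' i : ℤ)) =
      ∑ i ∈ F, (i - ℓ - 1) * (c' i : ℤ) := by
    apply finsum_mem_eq_sum_of_inter_support_eq
    ext i
    simp only [Set.mem_inter_iff, Set.mem_setOf_eq, Function.mem_support, Finset.coe_filter,
      Finset.mem_union, Finset.mem_insert, Finset.mem_singleton, Set.Finite.mem_toFinset,
      Set.mem_setOf_eq, hF]
    constructor
    · rintro ⟨hi, hne⟩
      by_cases htr : i = j - 1 ∨ i = j ∨ i = j + 1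
      · exact ⟨⟨Or.inr htr, hi⟩, hne⟩
      · push_neg at htr
        have hci : c' i = c i := hoth i htr.1 htr.2.1 htr.2.2
        have : c i ≠ 0 := by
          intro h0; apply hne; simp [hci, h0]
        exact ⟨⟨Or.inl this, hi⟩, hne⟩
    · rintro ⟨⟨_, hi⟩, hne⟩; exact ⟨hi, hne⟩
  -- the difference
  have hdiff : (∑ i ∈ F, (i - ℓ - 1) * (c' i : ℤ)) - ∑ i ∈ F, (i - ℓ - 1) * (c i : ℤ) =
      ∑ i ∈ F, (i - ℓ - 1) * ((c' i : ℤ) - (c i : ℤ)) := by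
    rw [← Finset.sum_sub_distrib]
    congr 1; ext i; ring
  set d : ℤ → ℤ := fun i => (i - ℓ - 1) * ((c' i : ℤ) - (c i : ℤ)) with hd
  have hG : ∑ i ∈ F, d i = ∑ i ∈ ({j - 1, j, j + 1} : Finset ℤ).filter (· ≤ ℓ), d i := by
    symm
    apply Finset.sum_subset
    · intro i hi
      simp only [Finset.mem_filter, Finset.mem_insert, Finset.mem_singleton] at hi ⊢
      simp only [hF, Finset.mem_filter, Finset.mem_union, Finset.mem_insert,
        Finset.mem_singleton]
      exact ⟨Or.inr hi.1, hi.2⟩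
    · intro i hiF hiG
      simp only [hF, Finset.mem_filter, Finset.mem_union] at hiF
      simp only [Finset.mem_filter, Finset.mem_insert, Finset.mem_singleton] at hiG
      have htr : i ≠ j - 1 ∧ i ≠ j ∧ i ≠ j + 1 := by
        by_contra hcon
        push_neg at hcon
        apply hiG
        refine ⟨?_, hiF.2⟩
        by_cases h1 : i = j - 1
        · exact Or.inl h1
        by_cases h2 : i = j
        · exact Or.inr (Or.inl h2)
        exact Or.inr (Or.inr (hcon h1 h2))
      rw [hd]
      simp [hoth i htr.1 htr.2.1 htr.2.2]
  have hGsum : ∑ i ∈ ({j - 1, j, j + 1} : Finset ℤ).filter (· ≤ ℓ), d i =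
      if j = ℓ + 1 then -1 else 0 := by
    rw [Finset.sum_filter]
    have hne1 : j - 1 ≠ j := by omega
    have hne2 : j - 1 ≠ j + 1 := by omega
    have hne3 : j ≠ j + 1 := by omega
    rw [Finset.sum_insert (by simp [hne1, hne2]), Finset.sum_insert (by simp [hne3]),
      Finset.sum_singleton]
    have dm : d (j - 1) = j - ℓ - 2 := by
      rw [hd]; simp only [hm]; push_cast; ring
    have dj : d j = -2 * (j - ℓ - 1) := by
      rw [hd]; simp only [hj]
      rw [Nat.cast_sub h2]; push_cast; ring
    have dp : d (j + 1) = j - ℓ := by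
      rw [hd]; simp only [hp]; push_cast; ring
    rcases lt_trichotomy j ℓ with hlt | heq | hgt
    · have e1 : j - 1 ≤ ℓ := by omega
      have e2 : j ≤ ℓ := by omega
      have e4 : j ≠ ℓ + 1 := by omega
      by_cases e3 : j + 1 ≤ ℓ <;> simp [e1, e2, e3, e4, dm, dj, dp] <;> omega
    · subst heq
      simp [dm, dj, dp]
    · rcases eq_or_lt_of_le (by omega : ℓ + 1 ≤ j) with heq2 | hgt2
      · have hjeq : j = ℓ + 1 := heq2.symm
        have e1 : j - 1 ≤ ℓ := by omega
        have e2 : ¬ j ≤ ℓ := by omega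
        have e3 : ¬ j + 1 ≤ ℓ := by omega
        rw [if_pos e1, if_neg e2, if_neg e3, if_pos hjeq, dm]
        omega
      · have e1 : ¬ j - 1 ≤ ℓ := by omega
        have e2 : ¬ j ≤ ℓ := by omega
        have e3 : ¬ j + 1 ≤ ℓ := by omega
        have e4 : j ≠ ℓ + 1 := by omega
        simp [e1, e2, e3, e4]
  rw [hcF, hc'F]
  have : (∑ i ∈ F, (i - ℓ - 1) * (c' i : ℤ)) =
      (∑ i ∈ F, (i - ℓ - 1) * (c i : ℤ)) + (if j = ℓ + 1 then -1 else 0) := by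
    rw [← hGsum, ← hG, ← hdiff]; ring
  rw [this]
  by_cases hcase : j = ℓ + 1 <;> simp [hcase] <;> ring
end

section
/- The single-firing relation on chip configurations on Z is acyclic: there is no sequence of one or more firings leading from a configuration c back to c. -/
noncomputable def Phi (c : ℤ → ℕ) : ℤ := ∑ᶠ i : ℤ, i ^ 2 * (c i : ℤ)

lemma phi_supp (c : ℤ → ℕ) :
    Function.support (fun i : ℤ => i ^ 2 * (c i : ℤ)) ⊆ Function.support c := by
  intro i hi
  simp only [Function.mem_support] at hi ⊢
  intro h; apply hi; simp [h]

lemma step_phi {c c' : ℤ → ℕ} (h : Step c c') (hc : (Function.support c).Finite) :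
    (Function.support c').Finite ∧ Phi c + 2 = Phi c' := by
  obtain ⟨j, h2, hl, hr, hm, ho⟩ := h
  have hc' : (Function.support c').Finite := by
    apply (hc.union ((Set.finite_singleton (j-1)).union
      ((Set.finite_singleton j).union (Set.finite_singleton (j+1))))).subset
    intro i hi
    by_cases h1 : i = j - 1
    · right; left; simp [h1]
    by_cases h3 : i = j
    · right; right; left; simp [h3]
    by_cases h4 : i = j + 1
    · right; right; right; simp [h4]
    · left; rw [Function.mem_support, ho i h1 h3 h4] at hi; exact hi
  refine ⟨hc', ?_⟩
  set s : Finset ℤ := hc.toFinset ∪ hc'.toFinset ∪ {j - 1, j, j + 1} with hs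
  have hsub : ({j - 1, j, j + 1} : Finset ℤ) ⊆ s := by
    intro i hi; exact Finset.mem_union_right _ hi
  have hΦ : Phi c = ∑ i ∈ s, i ^ 2 * (c i : ℤ) := by
    apply finsum_eq_finset_sum_of_support_subset
    refine (phi_supp c).trans ?_
    intro i hi
    exact Finset.mem_union_left _ (Finset.mem_union_left _ (hc.mem_toFinset.2 hi))
  have hΦ' : Phi c' = ∑ i ∈ s, i ^ 2 * (c' i : ℤ) := by
    apply finsum_eq_finset_sum_of_support_subset
    refine (phi_supp c').trans ?_
    intro i hi
    exact Finset.mem_union_left _ (Finset.mem_union_right _ (hc'.mem_toFinset.2 hi))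
  rw [hΦ, hΦ']
  have key : ∑ i ∈ s, (i ^ 2 * (c' i : ℤ) - i ^ 2 * (c i : ℤ)) = 2 := by
    rw [← Finset.sum_subset hsub (by
      intro i _ hi
      simp only [Finset.mem_insert, Finset.mem_singleton] at hi
      push_neg at hi
      rw [ho i hi.1 hi.2.1 hi.2.2]; ring)]
    have hne1 : (j - 1 : ℤ) ≠ j := by omega
    have hne2 : (j - 1 : ℤ) ≠ j + 1 := by omega
    have hne3 : (j : ℤ) ≠ j + 1 := by omega
    rw [show ({j - 1, j, j + 1} : Finset ℤ) = insert (j-1) (insert j {j+1}) from rfl,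
      Finset.sum_insert (by simp [hne1, hne2]), Finset.sum_insert (by simp [hne3]),
      Finset.sum_singleton]
    have hm' : (c' j : ℤ) = (c j : ℤ) - 2 := by
      rw [hm]; push_cast [Nat.cast_sub h2]; ring
    rw [hl, hr, hm']
    push_cast
    ring
  rw [Finset.sum_sub_distrib] at key
  omega

theorem stmt_4 (c : ℤ → ℕ) (hc : (Function.support c).Finite) :
    ¬ Relation.TransGen Step c c := by
  intro h
  have main : ∀ c' : ℤ → ℕ, Relation.TransGen Step c c' →
      (Function.support c').Finite ∧ Phi c < Phi c' := by
    intro c' h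
    induction h with
    | single hstep =>
        obtain ⟨hf, he⟩ := step_phi hstep hc
        exact ⟨hf, by omega⟩
    | tail _ hstep ih =>
        obtain ⟨hf, hlt⟩ := ih
        obtain ⟨hf', he⟩ := step_phi hstep hf
        exact ⟨hf', by omega⟩
  have := (main c h).2
  omega
end

section
/- The chip-firing process on Z is terminating: there is no infinite sequence c₀, c₁, c₂, … of configurations where each cᵢ₊₁ is obtained from cᵢ by a single firing move. -/
namespace ChipAux

/-- the change vector of a firing at `j` -/
def e (j i : ℤ) : ℤ :=
  (if i = j - 1 then 1 else 0) + (if i = j + 1 then 1 else 0) - (if i = j then 2 else 0)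

lemma fire_cast {c c' : ℤ → ℕ} {j : ℤ} (h : FireAt c j c') (i : ℤ) :
    (c' i : ℤ) = (c i : ℤ) + e j i := by
  obtain ⟨h2, hm, hp, hj, ho⟩ := h
  unfold e
  by_cases h1 : i = j - 1
  · subst h1
    rw [hm, if_pos rfl, if_neg (by omega), if_neg (by omega)]
    push_cast; ring
  · by_cases h3 : i = j + 1
    · subst h3
      rw [hp, if_neg (by omega), if_pos rfl, if_neg (by omega)]
      push_cast; ring
    · by_cases h4 : i = j
      · subst h4
        rw [hj, if_neg (by omega), if_neg (by omega), if_pos rfl, Nat.cast_sub h2]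
        push_cast; ring
      · rw [ho i h1 h4 h3, if_neg h1, if_neg h3, if_neg h4]; ring

lemma sum_e {A : Finset ℤ} {j : ℤ} (h1 : j - 1 ∈ A) (h2 : j ∈ A) (h3 : j + 1 ∈ A)
    (X : ℤ → ℤ) : ∑ i ∈ A, e j i * X i = X (j - 1) + X (j + 1) - 2 * X j := by
  have hpt : ∀ i, e j i * X i =
      (if i = j - 1 then X i else 0) + (if i = j + 1 then X i else 0)
        - (if i = j then 2 * X i else 0) := by
    intro i; unfold e; split_ifs <;> ring
  rw [Finset.sum_congr rfl fun i _ => hpt i, Finset.sum_sub_distrib, Finset.sum_add_distrib,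
    Finset.sum_ite_eq' A (j - 1), Finset.sum_ite_eq' A (j + 1), Finset.sum_ite_eq' A j,
    if_pos h1, if_pos h2, if_pos h3]

lemma step_sum {A : Finset ℤ} {c c' : ℤ → ℕ} {j : ℤ} (h : FireAt c j c')
    (h1 : j - 1 ∈ A) (h2 : j ∈ A) (h3 : j + 1 ∈ A) (g : ℤ → ℤ) :
    ∑ i ∈ A, (c' i : ℤ) * g i
      = (∑ i ∈ A, (c i : ℤ) * g i) + (g (j - 1) + g (j + 1) - 2 * g j) := by
  have hc : ∀ i ∈ A, (c' i : ℤ) * g i = (c i : ℤ) * g i + e j i * g i := by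
    intro i _; rw [fire_cast h i]; ring
  rw [Finset.sum_congr rfl hc, Finset.sum_add_distrib, sum_e h1 h2 h3]

/-- double-sum potential: sum of pairwise distances with multiplicity -/
def Vsum (A : Finset ℤ) (c : ℤ → ℕ) : ℤ :=
  ∑ i ∈ A, ∑ k ∈ A, (c i : ℤ) * (c k : ℤ) * |i - k|

lemma w_nonneg (j i : ℤ) : 0 ≤ |i - (j - 1)| + |i - (j + 1)| - 2 * |i - j| := by
  have habs := abs_add_le (i - (j - 1)) (i - (j + 1))
  have h1 : (i - (j - 1)) + (i - (j + 1)) = (i - j) + (i - j) := by ring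
  rw [h1] at habs
  have h2 : |(i - j) + (i - j)| = 2 * |i - j| := by
    rw [← two_mul, abs_mul]; norm_num
  rw [h2] at habs; linarith

lemma step_V {A : Finset ℤ} {c c' : ℤ → ℕ} {j : ℤ} (h : FireAt c j c')
    (h1 : j - 1 ∈ A) (h2 : j ∈ A) (h3 : j + 1 ∈ A) :
    Vsum A c + 4 ≤ Vsum A c' := by
  set w : ℤ → ℤ := fun i => |i - (j - 1)| + |i - (j + 1)| - 2 * |i - j| with hw
  have hwn : ∀ i, 0 ≤ w i := fun i => w_nonneg j i
  have hinner : ∀ i : ℤ, ∑ k ∈ A, e j k * |i - k| = w i := by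
    intro i; rw [sum_e h1 h2 h3 (fun k => |i - k|)]
  have expand : Vsum A c' = Vsum A c
      + (∑ i ∈ A, (c i : ℤ) * w i)
      + (∑ i ∈ A, e j i * (∑ k ∈ A, (c k : ℤ) * |i - k|))
      + (∑ i ∈ A, e j i * w i) := by
    unfold Vsum
    rw [← Finset.sum_add_distrib, ← Finset.sum_add_distrib, ← Finset.sum_add_distrib]
    apply Finset.sum_congr rfl
    intro i _
    rw [← hinner i, Finset.mul_sum, Finset.mul_sum, Finset.mul_sum,
      ← Finset.sum_add_distrib, ← Finset.sum_add_distrib, ← Finset.sum_add_distrib]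
    apply Finset.sum_congr rfl
    intro k _
    rw [fire_cast h i, fire_cast h k]; ring
  -- the third term equals ∑ k, c k * w k
  have t3 : ∑ i ∈ A, e j i * (∑ k ∈ A, (c k : ℤ) * |i - k|)
      = ∑ k ∈ A, (c k : ℤ) * w k := by
    rw [sum_e h1 h2 h3 (fun i => ∑ k ∈ A, (c k : ℤ) * |i - k|)]
    rw [Finset.mul_sum, ← Finset.sum_add_distrib, ← Finset.sum_sub_distrib]
    apply Finset.sum_congr rfl
    intro k _
    simp only [hw]
    rw [abs_sub_comm (j - 1) k, abs_sub_comm (j + 1) k, abs_sub_comm j k]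
    ring
  -- values of w near j
  have hwj : w j = 2 := by
    simp only [hw]
    have e1 : j - (j - 1) = 1 := by ring
    have e2 : j - (j + 1) = -1 := by ring
    have e3 : j - j = 0 := by ring
    rw [e1, e2, e3]; norm_num
  have hwjm : w (j - 1) = 0 := by
    simp only [hw]
    have e1 : j - 1 - (j - 1) = 0 := by ring
    have e2 : j - 1 - (j + 1) = -2 := by ring
    have e3 : j - 1 - j = -1 := by ring
    rw [e1, e2, e3]; norm_num
  have hwjp : w (j + 1) = 0 := by
    simp only [hw]
    have e1 : j + 1 - (j - 1) = 2 := by ring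
    have e2 : j + 1 - (j + 1) = 0 := by ring
    have e3 : j + 1 - j = 1 := by ring
    rw [e1, e2, e3]; norm_num
  have t4 : ∑ i ∈ A, e j i * w i = -4 := by
    rw [sum_e h1 h2 h3 w, hwj, hwjm, hwjp]; ring
  -- lower bounds for the two cross terms
  have hcj : (2 : ℤ) ≤ (c j : ℤ) := by exact_mod_cast h.1
  have tb : (4 : ℤ) ≤ ∑ i ∈ A, (c i : ℤ) * w i := by
    have hterm : (c j : ℤ) * w j ≤ ∑ i ∈ A, (c i : ℤ) * w i :=
      Finset.single_le_sum (fun i _ => mul_nonneg (Int.natCast_nonneg _) (hwn i)) h2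
    rw [hwj] at hterm; linarith
  rw [expand, t3, t4]; linarith

lemma sq_expand (A : Finset ℤ) (u : ℤ → ℤ) :
    ∑ i ∈ A, ∑ k ∈ A, (u i * u k) * (i - k) ^ 2
      = (∑ i ∈ A, u i * i ^ 2) * (∑ i ∈ A, u i) + (∑ i ∈ A, u i) * (∑ i ∈ A, u i * i ^ 2)
        - 2 * ((∑ i ∈ A, u i * i) * (∑ i ∈ A, u i * i)) := by
  have hpt : ∀ i ∈ A, ∑ k ∈ A, (u i * u k) * (i - k) ^ 2
      = (u i * i ^ 2) * (∑ k ∈ A, u k) + u i * (∑ k ∈ A, u k * k ^ 2)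
        - 2 * (u i * i) * (∑ k ∈ A, u k * k) := by
    intro i _
    simp only [Finset.mul_sum]
    rw [← Finset.sum_add_distrib, ← Finset.sum_sub_distrib]
    apply Finset.sum_congr rfl
    intro k _
    ring
  rw [Finset.sum_congr rfl hpt, Finset.sum_sub_distrib, Finset.sum_add_distrib,
    ← Finset.sum_mul, ← Finset.sum_mul, ← Finset.sum_mul, ← Finset.mul_sum]
  ring

/-- weighted Cauchy–Schwarz over ℤ, via ℝ -/
lemma weighted_cs {ι : Type*} (s : Finset ι) (w x : ι → ℤ) (hw : ∀ i ∈ s, 0 ≤ w i) :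
    (∑ i ∈ s, w i * |x i|) ^ 2 ≤ (∑ i ∈ s, w i) * ∑ i ∈ s, w i * x i ^ 2 := by
  have key : ((∑ i ∈ s, w i * |x i| : ℤ) : ℝ) ^ 2
      ≤ ((∑ i ∈ s, w i : ℤ) : ℝ) * ((∑ i ∈ s, w i * x i ^ 2 : ℤ) : ℝ) := by
    push_cast
    have hwr : ∀ i ∈ s, (0 : ℝ) ≤ (w i : ℝ) := fun i hi => by exact_mod_cast hw i hi
    have hcs := Finset.sum_mul_sq_le_sq_mul_sq s (fun i => Real.sqrt (w i))
      (fun i => Real.sqrt (w i) * |(x i : ℝ)|)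
    have e1 : ∑ i ∈ s, Real.sqrt (w i) * (Real.sqrt (w i) * |(x i : ℝ)|)
        = ∑ i ∈ s, (w i : ℝ) * |(x i : ℝ)| := by
      apply Finset.sum_congr rfl; intro i hi
      rw [← mul_assoc, Real.mul_self_sqrt (hwr i hi)]
    have e2 : ∑ i ∈ s, (Real.sqrt (w i)) ^ 2 = ∑ i ∈ s, (w i : ℝ) := by
      apply Finset.sum_congr rfl; intro i hi
      rw [Real.sq_sqrt (hwr i hi)]
    have e3 : ∑ i ∈ s, (Real.sqrt (w i) * |(x i : ℝ)|) ^ 2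
        = ∑ i ∈ s, (w i : ℝ) * (x i : ℝ) ^ 2 := by
      apply Finset.sum_congr rfl; intro i hi
      rw [mul_pow, Real.sq_sqrt (hwr i hi), sq_abs]
    rw [e1, e2, e3] at hcs
    exact hcs
  exact_mod_cast key

end ChipAux

open ChipAux in
theorem stmt_5 (f : ℕ → (ℤ → ℕ)) (h0 : (Function.support (f 0)).Finite) :
    ¬ ∀ n : ℕ, Step (f n) (f (n + 1)) := by
  intro hstep
  choose j hj using hstep
  -- initial support
  set s0 : Finset ℤ := h0.toFinset with hs0
  have hmem0 : ∀ i : ℤ, i ∈ s0 ↔ f 0 i ≠ 0 := by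
    intro i; simp [hs0, Set.Finite.mem_toFinset, Function.mem_support]
  have hne : s0.Nonempty := by
    refine ⟨j 0, ?_⟩
    rw [hmem0]
    have := (hj 0).1; omega
  set L : ℤ := s0.min' hne with hL
  set R : ℤ := s0.max' hne with hR
  -- support spreads by at most one per step
  have hsupp : ∀ m : ℕ, ∀ i : ℤ, f m i ≠ 0 → L - m ≤ i ∧ i ≤ R + m := by
    intro m
    induction m with
    | zero =>
      intro i hi
      have hiA : i ∈ s0 := (hmem0 i).2 hi
      have := s0.min'_le i hiA
      have := s0.le_max' i hiA
      push_cast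
      omega
    | succ m ih =>
      intro i hi
      obtain ⟨h2, hm, hp, hjq, ho⟩ := hj m
      have hjsupp : f m (j m) ≠ 0 := by omega
      have hjb := ih (j m) hjsupp
      by_cases e1 : i = j m - 1
      · push_cast; omega
      · by_cases e2 : i = j m
        · push_cast; omega
        · by_cases e3 : i = j m + 1
          · push_cast; omega
          · have : f m i ≠ 0 := by rw [← ho i e1 e2 e3]; exact hi
            have := ih i this
            push_cast at *
            omega
  -- the basic constants
  set N₀ : ℤ := ∑ i ∈ s0, (f 0 i : ℤ) with hN₀
  set Q₀ : ℤ := ∑ i ∈ s0, (f 0 i : ℤ) * i ^ 2 with hQ₀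
  have hN0nn : 0 ≤ N₀ := Finset.sum_nonneg fun i _ => Int.natCast_nonneg _
  have hQ0nn : 0 ≤ Q₀ :=
    Finset.sum_nonneg fun i _ => mul_nonneg (Int.natCast_nonneg _) (sq_nonneg _)
  -- the time horizon
  set T : ℕ := (N₀ ^ 3).toNat + Q₀.toNat + 1 with hT
  have hTcube : N₀ ^ 3 ≤ (T : ℤ) := by
    have := Int.self_le_toNat (N₀ ^ 3)
    have h1 : (0 : ℤ) ≤ (Q₀.toNat : ℤ) := Int.natCast_nonneg _
    push_cast [hT]
    omega
  have hTQ : Q₀ ≤ (T : ℤ) := by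
    have := Int.self_le_toNat Q₀
    have h1 : (0 : ℤ) ≤ ((N₀ ^ 3).toNat : ℤ) := Int.natCast_nonneg _
    push_cast [hT]
    omega
  have hT1 : (1 : ℤ) ≤ (T : ℤ) := by
    have : 1 ≤ T := by rw [hT]; omega
    exact_mod_cast this
  -- the ambient window
  set A : Finset ℤ := Finset.Icc (L - T) (R + T) with hA
  have hs0A : s0 ⊆ A := by
    intro i hi
    have := s0.min'_le i hi
    have := s0.le_max' i hi
    simp only [hA, Finset.mem_Icc]
    omega
  have memA : ∀ m : ℕ, m ≤ T → ∀ i : ℤ, f m i ≠ 0 → i ∈ A := by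
    intro m hmT i hi
    have hb := hsupp m i hi
    have : (m : ℤ) ≤ (T : ℤ) := by exact_mod_cast hmT
    simp only [hA, Finset.mem_Icc]
    omega
  -- memberships needed at step m < T
  have hmem3 : ∀ m : ℕ, m < T → j m - 1 ∈ A ∧ j m ∈ A ∧ j m + 1 ∈ A := by
    intro m hmT
    obtain ⟨h2, hm, hp, hjq, ho⟩ := hj m
    refine ⟨?_, ?_, ?_⟩
    · exact memA (m + 1) hmT (j m - 1) (by omega)
    · exact memA m (le_of_lt hmT) (j m) (by omega)
    · exact memA (m + 1) hmT (j m + 1) (by omega)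
  -- invariants
  have hNm : ∀ m : ℕ, m ≤ T → ∑ i ∈ A, (f m i : ℤ) = N₀ := by
    intro m
    induction m with
    | zero =>
      intro _
      rw [hN₀]
      symm
      apply Finset.sum_subset hs0A
      intro x _ hx
      have : f 0 x = 0 := by by_contra hc; exact hx ((hmem0 x).2 hc)
      simp [this]
    | succ m ih =>
      intro hmT
      obtain ⟨ha1, ha2, ha3⟩ := hmem3 m hmT
      have hss := step_sum (hj m) ha1 ha2 ha3 (fun _ => 1)
      simp only [mul_one] at hss
      rw [hss, ih (Nat.le_of_succ_le hmT)]
      ring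
  have hQm : ∀ m : ℕ, m ≤ T → ∑ i ∈ A, (f m i : ℤ) * i ^ 2 = Q₀ + 2 * m := by
    intro m
    induction m with
    | zero =>
      intro _
      rw [hQ₀]
      push_cast
      rw [add_zero]
      symm
      apply Finset.sum_subset hs0A
      intro x _ hx
      have : f 0 x = 0 := by by_contra hc; exact hx ((hmem0 x).2 hc)
      simp [this]
    | succ m ih =>
      intro hmT
      obtain ⟨ha1, ha2, ha3⟩ := hmem3 m hmT
      rw [step_sum (hj m) ha1 ha2 ha3 (fun i => i ^ 2), ih (Nat.le_of_succ_le hmT)]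
      push_cast
      ring
  have hVm : ∀ m : ℕ, m ≤ T → 4 * (m : ℤ) ≤ Vsum A (f m) := by
    intro m
    induction m with
    | zero =>
      intro _
      simp only [Nat.cast_zero, mul_zero]
      apply Finset.sum_nonneg
      intro i _
      apply Finset.sum_nonneg
      intro k _
      exact mul_nonneg (mul_nonneg (Int.natCast_nonneg _) (Int.natCast_nonneg _)) (abs_nonneg _)
    | succ m ih =>
      intro hmT
      obtain ⟨ha1, ha2, ha3⟩ := hmem3 m hmT
      have := step_V (hj m) ha1 ha2 ha3
      have := ih (Nat.le_of_succ_le hmT)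
      push_cast
      linarith
  -- Cauchy–Schwarz at time T
  set ST : ℤ := ∑ i ∈ A, (f T i : ℤ) * i with hST
  have hcs := weighted_cs (A ×ˢ A) (fun p => (f T p.1 : ℤ) * (f T p.2 : ℤ))
    (fun p => p.1 - p.2)
    (fun p _ => mul_nonneg (Int.natCast_nonneg _) (Int.natCast_nonneg _))
  beta_reduce at hcs
  have hV : ∑ p ∈ A ×ˢ A, ((f T p.1 : ℤ) * (f T p.2 : ℤ)) * |p.1 - p.2| = Vsum A (f T) := by
    rw [Finset.sum_product' (f := fun i k => ((f T i : ℤ) * (f T k : ℤ)) * |i - k|)]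
    rfl
  have hW : ∑ p ∈ A ×ˢ A, ((f T p.1 : ℤ) * (f T p.2 : ℤ)) = N₀ ^ 2 := by
    rw [Finset.sum_product' (f := fun i k => ((f T i : ℤ) * (f T k : ℤ))),
      ← Finset.sum_mul_sum, hNm T le_rfl]
    ring
  have hP : ∑ p ∈ A ×ˢ A, ((f T p.1 : ℤ) * (f T p.2 : ℤ)) * (p.1 - p.2) ^ 2
      = 2 * N₀ * (Q₀ + 2 * T) - 2 * ST ^ 2 := by
    rw [Finset.sum_product' (f := fun i k => ((f T i : ℤ) * (f T k : ℤ)) * (i - k) ^ 2),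
      sq_expand A (fun i => (f T i : ℤ)), hNm T le_rfl, hQm T le_rfl, ← hST]
    ring
  rw [hV, hW, hP] at hcs
  -- final numeric contradiction
  have hVT := hVm T le_rfl
  have hVsq : (4 * (T : ℤ)) ^ 2 ≤ Vsum A (f T) ^ 2 := by
    apply pow_le_pow_left₀ (by positivity) hVT
  have hSTsq : 0 ≤ ST ^ 2 := sq_nonneg _
  nlinarith [hcs, hVsq, hSTsq, hTcube, hTQ, hT1, hN0nn, hQ0nn, sq_nonneg N₀,
    mul_nonneg hN0nn hN0nn]
end

section
/- For any configuration c of unlabeled chips on Z, there exists a unique stable configuration d reachable from c by a sequence of firings. -/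
/-!
Uniqueness: firings at two different vertices commute, so firing is locally confluent, and a
stable configuration admits no firing; the Church–Rosser lemma does the rest.

Existence: add the chips one at a time. If `s` is stable with finite support, then for the tent
`w i = H - |i - x|` with `H` beyond the support of `s`, firing every vertex `i` exactly `w i`
times (legally or not) would leave `s + δₓ` stable. Firing any unstable vertex `j` and
decreasing `w j` by one keeps this property, so legal firings stop after at most `∑ w` steps.
-/

-- truncated subtraction is harmless: `fire c j` is only used when `2 ≤ c j`
def fire (c : ℤ → ℕ) (j : ℤ) : ℤ → ℕ :=
  c + Pi.single (j - 1) 1 + Pi.single (j + 1) 1 - Pi.single j 2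

lemma fire_apply (c : ℤ → ℕ) (j i : ℤ) :
    fire c j i = c i + (if i = j - 1 then 1 else 0) + (if i = j + 1 then 1 else 0)
      - (if i = j then 2 else 0) := by
  simp only [fire, Pi.add_apply, Pi.sub_apply, Pi.single_apply]

lemma fireAt_iff {c c' : ℤ → ℕ} {j : ℤ} : FireAt c j c' ↔ 2 ≤ c j ∧ c' = fire c j := by
  constructor
  · rintro ⟨hj, hl, hr, hc, hother⟩
    refine ⟨hj, funext fun i => ?_⟩
    rw [fire_apply]
    grind
  · rintro ⟨hj, rfl⟩
    refine ⟨hj, ?_, ?_, ?_, fun i _ _ _ => ?_⟩ <;> simp only [fire_apply] <;> grind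

lemma step_iff {c c' : ℤ → ℕ} : Step c c' ↔ ∃ j, 2 ≤ c j ∧ c' = fire c j :=
  exists_congr fun _ => fireAt_iff

lemma step_fire {c : ℤ → ℕ} {j : ℤ} (hj : 2 ≤ c j) : Step c (fire c j) :=
  step_iff.mpr ⟨j, hj, rfl⟩

lemma le_fire_apply {c : ℤ → ℕ} {i j : ℤ} (h : i ≠ j) : c i ≤ fire c j i := by
  rw [fire_apply]; grind

lemma fire_comm {c : ℤ → ℕ} {j k : ℤ} (hj : 2 ≤ c j) (hk : 2 ≤ c k) :
    fire (fire c j) k = fire (fire c k) j := by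
  funext i
  simp only [fire_apply]
  grind

lemma step_diamond {a b c : ℤ → ℕ} (hab : Step a b) (hac : Step a c) :
    ∃ d, Relation.ReflGen Step b d ∧ Relation.ReflTransGen Step c d := by
  obtain ⟨j, hj, rfl⟩ := step_iff.mp hab
  obtain ⟨k, hk, rfl⟩ := step_iff.mp hac
  obtain rfl | hjk := eq_or_ne j k
  · exact ⟨_, .refl, .refl⟩
  refine ⟨fire (fire a j) k, .single (step_fire ?_), fire_comm hj hk ▸ .single (step_fire ?_)⟩
  · exact hk.trans (le_fire_apply hjk.symm)
  · exact hj.trans (le_fire_apply hjk)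

lemma Stable.not_step {d e : ℤ → ℕ} (hd : Stable d) : ¬ Step d e := fun ⟨j, hj⟩ =>
  absurd hj.1 (by have := hd j; omega)

lemma Stable.eq_of_reaches {d e : ℤ → ℕ} (hd : Stable d) (h : Reaches d e) : d = e := by
  rcases h.cases_head with rfl | ⟨_, hstep, _⟩
  · rfl
  · exact absurd hstep hd.not_step

lemma eq_of_reaches_of_stable {c d d' : ℤ → ℕ} (h : Reaches c d) (hd : Stable d)
    (h' : Reaches c d') (hd' : Stable d') : d = d' := by
  obtain ⟨e, hde, hd'e⟩ := Relation.church_rosser (fun _ _ _ => step_diamond) h h'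
  exact (hd.eq_of_reaches hde).trans (hd'.eq_of_reaches hd'e).symm

lemma fire_add {c : ℤ → ℕ} {j : ℤ} (hj : 2 ≤ c j) (e : ℤ → ℕ) :
    fire (c + e) j = fire c j + e := by
  funext i
  simp only [fire_apply, Pi.add_apply]
  grind

lemma Step.add_right {c c' : ℤ → ℕ} (h : Step c c') (e : ℤ → ℕ) : Step (c + e) (c' + e) := by
  obtain ⟨j, hj, rfl⟩ := step_iff.mp h
  exact fire_add hj e ▸ step_fire (le_add_right hj)

lemma Reaches.add_right {c d : ℤ → ℕ} (h : Reaches c d) (e : ℤ → ℕ) : Reaches (c + e) (d + e) :=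
  Relation.ReflTransGen.lift (· + e) (fun _ _ hs => hs.add_right e) _ _ h

lemma Step.support_finite {c c' : ℤ → ℕ} (h : Step c c') (hc : c.support.Finite) :
    c'.support.Finite := by
  obtain ⟨j, -, rfl⟩ := step_iff.mp h
  refine ((hc.insert (j - 1)).insert (j + 1)).subset fun i hi => ?_
  simp only [Function.mem_support, fire_apply] at hi
  simp only [Set.mem_insert_iff, Function.mem_support]
  grind

lemma Reaches.support_finite {c d : ℤ → ℕ} (h : Reaches c d) (hc : c.support.Finite) :
    d.support.Finite := by
  induction h with
  | refl => exact hc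
  | tail _ hstep ih => exact hstep.support_finite ih

/-- `w i` counts firings at `i` whose execution, legal or not, would leave `c` stable. -/
def IsStabilizingOdometer (c w : ℤ → ℕ) : Prop :=
  ∀ i, c i + w (i - 1) + w (i + 1) ≤ 1 + 2 * w i

lemma IsStabilizingOdometer.pos {c w : ℤ → ℕ} {j : ℤ} (h : IsStabilizingOdometer c w)
    (hj : 2 ≤ c j) : 0 < w j := by
  have := h j; omega

lemma IsStabilizingOdometer.fire {c w : ℤ → ℕ} {j : ℤ} (h : IsStabilizingOdometer c w)
    (hj : 2 ≤ c j) : IsStabilizingOdometer (fire c j) (Function.update w j (w j - 1)) := by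
  have hw := h.pos hj
  intro i
  have := h i
  simp only [fire_apply, Function.update_apply]
  grind

lemma exists_reaches_stable_of_odometer {s : Finset ℤ} {c w : ℤ → ℕ} (hs : w.support ⊆ s)
    (hw : IsStabilizingOdometer c w) : ∃ d, Reaches c d ∧ Stable d := by
  induction hn : ∑ i ∈ s, w i using Nat.strong_induction_on generalizing c w with
  | _ n ih =>
  by_cases hc : Stable c
  · exact ⟨c, .refl, hc⟩
  obtain ⟨j, hj⟩ : ∃ j, 2 ≤ c j := by simpa [Stable, Nat.lt_iff_add_one_le] using hc
  have hwj := hw.pos hj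
  have hjs : j ∈ s := hs hwj.ne'
  have hs' : (Function.update w j (w j - 1)).support ⊆ s := fun i hi => by
    refine hs ?_
    simp only [Function.mem_support, Function.update_apply] at hi ⊢
    grind
  have hsum : ∑ i ∈ s, Function.update w j (w j - 1) i < n := by
    rw [Finset.sum_update_of_mem hjs, ← hn, Finset.sum_eq_add_sum_sdiff_singleton_of_mem hjs]
    omega
  obtain ⟨d, hd, hds⟩ := ih _ hsum hs' (hw.fire hj) rfl
  exact ⟨d, .head (step_fire hj) hd, hds⟩

-- The tent is affine away from `x`, its kink at `x` absorbs the added chip, and `s` vanishes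
-- at its foot.
lemma Stable.isStabilizingOdometer_add_single {s : ℤ → ℕ} (hs : Stable s) {x : ℤ} {H : ℕ}
    (hH : ∀ i, H ≤ (i - x).natAbs → s i = 0) :
    IsStabilizingOdometer (s + Pi.single x 1) fun i => H - (i - x).natAbs := by
  intro i
  have := hs i
  have := hH i
  simp only [Pi.add_apply, Pi.single_apply]
  grind

lemma Stable.exists_reaches_stable_add_single {s : ℤ → ℕ} (hs : Stable s)
    (hfin : s.support.Finite) (x : ℤ) : ∃ d, Reaches (s + Pi.single x 1) d ∧ Stable d := by
  obtain ⟨b, hb⟩ := hfin.bddAbove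
  obtain ⟨a, ha⟩ := hfin.bddBelow
  set H := (b - x).toNat + (x - a).toNat + 1
  have hH : ∀ i, H ≤ (i - x).natAbs → s i = 0 := fun i hi => by
    by_contra h
    have := hb h
    have := ha h
    omega
  refine exists_reaches_stable_of_odometer (s := Finset.Icc (x - H) (x + H)) (fun i hi => ?_)
    (hs.isStabilizingOdometer_add_single hH)
  simp only [Function.mem_support, Finset.coe_Icc, Set.mem_Icc] at hi ⊢
  omega

lemma exists_reaches_stable_count (m : Multiset ℤ) :
    ∃ d, Reaches (fun i => m.count i) d ∧ Stable d := by
  induction m using Multiset.induction_on with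
  | empty => exact ⟨_, .refl, fun i => by simp⟩
  | cons x m ih =>
    obtain ⟨s, hms, hs⟩ := ih
    have hfin : (fun i => m.count i).support.Finite :=
      m.toFinset.finite_toSet.subset fun i hi => by simpa using hi
    obtain ⟨d, hsd, hd⟩ := hs.exists_reaches_stable_add_single (hms.support_finite hfin) x
    have hcons : (fun i => (x ::ₘ m).count i) = (fun i => m.count i) + Pi.single x 1 := by
      funext i
      simp [Multiset.count_cons, Pi.single_apply]
    exact ⟨d, hcons ▸ (hms.add_right _).trans hsd, hd⟩

lemma exists_reaches_stable {c : ℤ → ℕ} (hc : c.support.Finite) :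
    ∃ d, Reaches c d ∧ Stable d := by
  have hcount : (fun i => (Finsupp.ofSupportFinite c hc).toMultiset.count i) = c := by
    funext i
    simp [Finsupp.ofSupportFinite_coe]
  exact hcount ▸ exists_reaches_stable_count _

theorem stmt_6 (c : ℤ → ℕ) (hc : (Function.support c).Finite) :
    ∃! d : ℤ → ℕ, Reaches c d ∧ Stable d := by
  obtain ⟨d, hcd, hd⟩ := exists_reaches_stable hc
  exact ⟨d, ⟨hcd, hd⟩, fun d' ⟨hcd', hd'⟩ => eq_of_reaches_of_stable hcd' hd' hcd hd⟩
end

section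
/- Let a < b be integers and let a ≤ i ≤ b. Let c be the configuration with one chip at each vertex of [a+1, b-1] plus one additional chip at vertex i. Then the stabilization of c is the configuration with one chip at each vertex of [a, a+b-i-1] ∪ [a+b-i+1, b] and no other chips. -/
lemma fireAt_val {c c' : ℤ → ℕ} {j : ℤ} (hf : FireAt c j c') (x : ℤ) :
    (c' x : ℤ) = (c x : ℤ) + (if x = j - 1 then 1 else 0) + (if x = j + 1 then 1 else 0)
      - (if x = j then 2 else 0) := by
  obtain ⟨h2, hl, hr, hj, ho⟩ := hf
  by_cases h1 : x = j - 1
  · subst h1; rw [hl]; split_ifs <;> omega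
  · by_cases h3 : x = j + 1
    · subst h3; rw [hr]; split_ifs <;> omega
    · by_cases h0 : x = j
      · subst h0; rw [hj]; split_ifs <;> omega
      · rw [ho x h1 h0 h3]; split_ifs <;> omega

lemma fireAt_of_val {c c' : ℤ → ℕ} {j : ℤ} (h2 : 2 ≤ c j)
    (hval : ∀ x : ℤ, (c' x : ℤ) = (c x : ℤ) + (if x = j - 1 then 1 else 0)
      + (if x = j + 1 then 1 else 0) - (if x = j then 2 else 0)) :
    FireAt c j c' := by
  refine ⟨h2, ?_, ?_, ?_, ?_⟩
  · have := hval (j - 1); split_ifs at this <;> omega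
  · have := hval (j + 1); split_ifs at this <;> omega
  · have := hval j; split_ifs at this <;> omega
  · intro i hi1 hi2 hi3
    have := hval i; split_ifs at this <;> omega

lemma step_add {c c' : ℤ → ℕ} (e : ℤ → ℕ) (h : Step c c') :
    Step (fun z => c z + e z) (fun z => c' z + e z) := by
  obtain ⟨j, hf⟩ := h
  refine ⟨j, fireAt_of_val (le_trans hf.1 (Nat.le_add_right _ _)) ?_⟩
  intro x
  have := fireAt_val hf x
  split_ifs at this ⊢ <;> push_cast <;> omega

lemma reaches_add {c d : ℤ → ℕ} (e : ℤ → ℕ) (h : Reaches c d) :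
    Reaches (fun z => c z + e z) (fun z => d z + e z) := by
  induction h with
  | refl => exact Relation.ReflTransGen.refl
  | tail _ hstep ih => exact ih.tail (step_add e hstep)

lemma step_add_left {c c' : ℤ → ℕ} (e : ℤ → ℕ) (h : Step c c') :
    Step (fun z => e z + c z) (fun z => e z + c' z) := by
  obtain ⟨j, hf⟩ := h
  refine ⟨j, fireAt_of_val (le_trans hf.1 (Nat.le_add_left _ _)) ?_⟩
  intro x
  have := fireAt_val hf x
  split_ifs at this ⊢ <;> push_cast <;> omega

lemma reaches_add_left {c d : ℤ → ℕ} (e : ℤ → ℕ) (h : Reaches c d) :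
    Reaches (fun z => e z + c z) (fun z => e z + d z) := by
  induction h with
  | refl => exact Relation.ReflTransGen.refl
  | tail _ hstep ih => exact ih.tail (step_add_left e hstep)

/-- indicator of the interval `[x, y]` -/
def ind (x y : ℤ) : ℤ → ℕ := fun z => if x ≤ z ∧ z ≤ y then 1 else 0

/-- a single chip at `p` -/
def one (p : ℤ) : ℤ → ℕ := fun z => if z = p then 1 else 0

lemma reaches_congr {c c' d d' : ℤ → ℕ} (h1 : c = c') (h2 : d = d') (h : Reaches c d) :
    Reaches c' d' := h1 ▸ h2 ▸ h

lemma lemA : ∀ n : ℕ, ∀ x y : ℤ, y - x = (n : ℤ) →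
    Reaches (fun z => ind x y z + one y z) (fun z => one (x - 1) z + ind (x + 1) (y + 1) z) := by
  intro n
  induction n with
  | zero =>
    intro x y hxy
    have hyx : y = x := by omega
    subst hyx
    refine Relation.ReflTransGen.single ⟨y, fireAt_of_val ?_ ?_⟩
    · simp only [ind, one]; split_ifs <;> omega
    · intro z; simp only [ind, one]; split_ifs <;> omega
  | succ n IH =>
    intro x y hxy
    have hxlt : x < y := by omega
    have step1 : Step (fun z => ind x y z + one y z)
        (fun z => (ind x (y - 1) z + one (y - 1) z) + one (y + 1) z) := by
      refine ⟨y, fireAt_of_val ?_ ?_⟩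
      · simp only [ind, one]; split_ifs <;> omega
      · intro z; simp only [ind, one]; split_ifs <;> omega
    have r2 := reaches_add (one (y + 1)) (IH x (y - 1) (by omega))
    have heq : (fun z => (one (x - 1) z + ind (x + 1) (y - 1 + 1) z) + one (y + 1) z)
        = (fun z => one (x - 1) z + ind (x + 1) (y + 1) z) := by
      funext z; simp only [ind, one]; split_ifs <;> omega
    exact (Relation.ReflTransGen.single step1).trans (reaches_congr rfl heq r2)

lemma lemA' : ∀ n : ℕ, ∀ x y : ℤ, y - x = (n : ℤ) →
    Reaches (fun z => ind x y z + one x z) (fun z => ind (x - 1) (y - 1) z + one (y + 1) z) := by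
  intro n
  induction n with
  | zero =>
    intro x y hxy
    have hyx : y = x := by omega
    subst hyx
    refine Relation.ReflTransGen.single ⟨y, fireAt_of_val ?_ ?_⟩
    · simp only [ind, one]; split_ifs <;> omega
    · intro z; simp only [ind, one]; split_ifs <;> omega
  | succ n IH =>
    intro x y hxy
    have hxlt : x < y := by omega
    have step1 : Step (fun z => ind x y z + one x z)
        (fun z => (ind (x + 1) y z + one (x + 1) z) + one (x - 1) z) := by
      refine ⟨x, fireAt_of_val ?_ ?_⟩
      · simp only [ind, one]; split_ifs <;> omega
      · intro z; simp only [ind, one]; split_ifs <;> omega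
    have r2 := reaches_add (one (x - 1)) (IH (x + 1) y (by omega))
    have heq : (fun z => (ind (x + 1 - 1) (y - 1) z + one (y + 1) z) + one (x - 1) z)
        = (fun z => ind (x - 1) (y - 1) z + one (y + 1) z) := by
      funext z; simp only [ind, one]; split_ifs <;> omega
    exact (Relation.ReflTransGen.single step1).trans (reaches_congr rfl heq r2)

set_option maxHeartbeats 2000000 in
lemma main_reach : ∀ n : ℕ, ∀ a b i : ℤ, b - a = (n : ℤ) → a < b → a ≤ i → i ≤ b →
    Reaches (fun z => ind (a + 1) (b - 1) z + one i z)
      (fun z => ind a (a + b - i - 1) z + ind (a + b - i + 1) b z) := by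
  intro n
  induction n using Nat.strong_induction_on with
  | _ n IH =>
    intro a b i hn hab hai hib
    by_cases hia : i = a
    · subst hia
      have heq : (fun z => ind (i + 1) (b - 1) z + one i z)
          = (fun z => ind i (i + b - i - 1) z + ind (i + b - i + 1) b z) := by
        funext z; simp only [ind, one]; split_ifs <;> omega
      exact reaches_congr rfl heq (heq ▸ Relation.ReflTransGen.refl)
    by_cases hibb : i = b
    · subst hibb
      have heq : (fun z => ind (a + 1) (i - 1) z + one i z)
          = (fun z => ind a (a + i - i - 1) z + ind (a + i - i + 1) i z) := by
        funext z; simp only [ind, one]; split_ifs <;> omega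
      exact heq ▸ Relation.ReflTransGen.refl
    -- interior: a < i < b
    have hai' : a < i := lt_of_le_of_ne hai (Ne.symm hia)
    have hib' : i < b := lt_of_le_of_ne hib hibb
    by_cases hb2 : b = a + 2
    · -- single fire
      have hi1 : i = a + 1 := by omega
      refine Relation.ReflTransGen.single ⟨i, fireAt_of_val ?_ ?_⟩
      · simp only [ind, one]; split_ifs <;> omega
      · intro z; simp only [ind, one]; split_ifs <;> omega
    by_cases hix : i = a + 1
    · -- i at left end, b ≥ a + 3
      subst hix
      have step1 : Step (fun z => ind (a + 1) (b - 1) z + one (a + 1) z)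
          (fun z => (ind (a + 2) (b - 1) z + one (a + 2) z) + one a z) := by
        refine ⟨a + 1, fireAt_of_val ?_ ?_⟩
        · simp only [ind, one]; split_ifs <;> omega
        · intro z; simp only [ind, one]; split_ifs <;> omega
      obtain ⟨m, hm⟩ : ∃ m : ℕ, (b - 1) - (a + 2) = (m : ℤ) := ⟨(b - a - 3).toNat, by omega⟩
      have r2 := reaches_add (one a) (lemA' m (a + 2) (b - 1) hm)
      have heq : (fun z => (ind (a + 2 - 1) (b - 1 - 1) z + one (b - 1 + 1) z) + one a z)
          = (fun z => ind a (a + b - (a + 1) - 1) z + ind (a + b - (a + 1) + 1) b z) := by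
        funext z; simp only [ind, one]; split_ifs <;> omega
      exact (Relation.ReflTransGen.single step1).trans (reaches_congr rfl heq r2)
    by_cases hiy : i = b - 1
    · -- i at right end
      subst hiy
      have step1 : Step (fun z => ind (a + 1) (b - 1) z + one (b - 1) z)
          (fun z => (ind (a + 1) (b - 2) z + one (b - 2) z) + one b z) := by
        refine ⟨b - 1, fireAt_of_val ?_ ?_⟩
        · simp only [ind, one]; split_ifs <;> omega
        · intro z; simp only [ind, one]; split_ifs <;> omega
      obtain ⟨m, hm⟩ : ∃ m : ℕ, (b - 2) - (a + 1) = (m : ℤ) := ⟨(b - a - 3).toNat, by omega⟩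
      have r2 := reaches_add (one b) (lemA m (a + 1) (b - 2) hm)
      have heq : (fun z => (one (a + 1 - 1) z + ind (a + 1 + 1) (b - 2 + 1) z) + one b z)
          = (fun z => ind a (a + b - (b - 1) - 1) z + ind (a + b - (b - 1) + 1) b z) := by
        funext z; simp only [ind, one]; split_ifs <;> omega
      exact (Relation.ReflTransGen.single step1).trans (reaches_congr rfl heq r2)
    -- fully interior: a + 1 < i < b - 1
    have hax : a + 1 < i := lt_of_le_of_ne (by omega) (Ne.symm hix)
    have hyb : i < b - 1 := lt_of_le_of_ne (by omega) hiy
    have step1 : Step (fun z => ind (a + 1) (b - 1) z + one i z)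
        (fun z => (ind (a + 1) (i - 1) z + one (i - 1) z)
          + (ind (i + 1) (b - 1) z + one (i + 1) z)) := by
      refine ⟨i, fireAt_of_val ?_ ?_⟩
      · simp only [ind, one]; split_ifs <;> omega
      · intro z; simp only [ind, one]; split_ifs <;> omega
    obtain ⟨m1, hm1⟩ : ∃ m : ℕ, (i - 1) - (a + 1) = (m : ℤ) := ⟨(i - a - 2).toNat, by omega⟩
    have r2 := reaches_add (fun z => ind (i + 1) (b - 1) z + one (i + 1) z)
      (lemA m1 (a + 1) (i - 1) hm1)
    obtain ⟨m2, hm2⟩ : ∃ m : ℕ, (b - 1) - (i + 1) = (m : ℤ) := ⟨(b - i - 2).toNat, by omega⟩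
    have r3 := reaches_add_left (fun z => one (a + 1 - 1) z + ind (a + 1 + 1) (i - 1 + 1) z)
      (lemA' m2 (i + 1) (b - 1) hm2)
    have heq4 : (fun z => (one (a + 1 - 1) z + ind (a + 1 + 1) (i - 1 + 1) z)
          + (ind (i + 1 - 1) (b - 1 - 1) z + one (b - 1 + 1) z))
        = (fun z => (one a z + one b z) + (ind (a + 1 + 1) (b - 1 - 1) z + one i z)) := by
      funext z; simp only [ind, one]; split_ifs <;> omega
    obtain ⟨m3, hm3lt, hm3⟩ : ∃ m : ℕ, m < n ∧ (b - 1) - (a + 1) = (m : ℤ) :=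
      ⟨(b - a - 2).toNat, by omega, by omega⟩
    have r5 := reaches_add_left (fun z => one a z + one b z)
      (IH m3 hm3lt (a + 1) (b - 1) i hm3 (by omega) (by omega) (by omega))
    have heq6 : (fun z => (one a z + one b z)
          + (ind (a + 1) (a + 1 + (b - 1) - i - 1) z + ind (a + 1 + (b - 1) - i + 1) (b - 1) z))
        = (fun z => ind a (a + b - i - 1) z + ind (a + b - i + 1) b z) := by
      funext z; simp only [ind, one]; split_ifs <;> omega
    exact (Relation.ReflTransGen.single step1).trans
      ((r2.trans (heq4 ▸ r3)).trans (reaches_congr rfl heq6 r5))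

/-- the result of firing at `j` -/
def fireFn (c : ℤ → ℕ) (j : ℤ) : ℤ → ℕ := fun x =>
  if x = j then c j - 2 else if x = j - 1 then c x + 1 else if x = j + 1 then c x + 1 else c x

lemma fireFn_val (c : ℤ → ℕ) (j : ℤ) (h2 : 2 ≤ c j) (x : ℤ) :
    (fireFn c j x : ℤ) = (c x : ℤ) + (if x = j - 1 then 1 else 0)
      + (if x = j + 1 then 1 else 0) - (if x = j then 2 else 0) := by
  simp only [fireFn]
  split_ifs <;> subst_vars <;> omega

lemma step_fireFn {c : ℤ → ℕ} {j : ℤ} (h2 : 2 ≤ c j) : Step c (fireFn c j) :=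
  ⟨j, fireAt_of_val h2 (fireFn_val c j h2)⟩

lemma diamond : ∀ c c1 c2 : ℤ → ℕ, Step c c1 → Step c c2 →
    ∃ d, Relation.ReflGen Step c1 d ∧ Relation.ReflTransGen Step c2 d := by
  rintro c c1 c2 ⟨j, hj⟩ ⟨k, hk⟩
  by_cases hjk : j = k
  · subst hjk
    have heq : c1 = c2 := by
      funext x
      have h1 := fireAt_val hj x
      have h2 := fireAt_val hk x
      omega
    exact ⟨c1, Relation.ReflGen.refl, heq ▸ Relation.ReflTransGen.refl⟩
  · have h2k : 2 ≤ c1 k := by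
      have h1 := fireAt_val hj k
      have h2 := hk.1
      split_ifs at h1 <;> omega
    have h2j : 2 ≤ c2 j := by
      have h1 := fireAt_val hk j
      have h2 := hj.1
      split_ifs at h1 <;> omega
    refine ⟨fireFn c1 k, Relation.ReflGen.single (step_fireFn h2k),
      Relation.ReflTransGen.single ⟨j, fireAt_of_val h2j ?_⟩⟩
    intro x
    have e1 := fireFn_val c1 k h2k x
    have e2 := fireAt_val hj x
    have e3 := fireAt_val hk x
    split_ifs at e1 e2 e3 ⊢ <;> omega

lemma stable_reaches_eq {d e : ℤ → ℕ} (hs : Stable d) (h : Reaches d e) : e = d := by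
  rcases Relation.ReflTransGen.cases_head h with rfl | ⟨c, hstep, _⟩
  · rfl
  · obtain ⟨j, hf⟩ := hstep
    exact absurd (le_trans hf.1 (hs j)) (by norm_num)

theorem stmt_7 (a b i : ℤ) (hab : a < b) (hai : a ≤ i) (hib : i ≤ b)
    (c : ℤ → ℕ)
    (hc : c = fun x => (if a + 1 ≤ x ∧ x ≤ b - 1 then 1 else 0) + (if x = i then 1 else 0))
    (d : ℤ → ℕ) (hd : Reaches c d) (hstable : Stable d) :
    d = fun x =>
      if (a ≤ x ∧ x ≤ a + b - i - 1) ∨ (a + b - i + 1 ≤ x ∧ x ≤ b) then 1 else 0 := by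
  set tgt : ℤ → ℕ := fun x =>
    if (a ≤ x ∧ x ≤ a + b - i - 1) ∨ (a + b - i + 1 ≤ x ∧ x ≤ b) then 1 else 0 with htgt
  have hstgt : Stable tgt := by
    intro z; simp only [htgt]; split_ifs <;> omega
  obtain ⟨n, hn⟩ : ∃ n : ℕ, b - a = (n : ℤ) := ⟨(b - a).toNat, by omega⟩
  have hr : Reaches c tgt := by
    have := main_reach n a b i hn hab hai hib
    have hc2 : c = (fun z => ind (a + 1) (b - 1) z + one i z) := by
      rw [hc]; funext z; simp only [ind, one]
    have ht2 : tgt = (fun z => ind a (a + b - i - 1) z + ind (a + b - i + 1) b z) := by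
      funext z; simp only [htgt, ind, one]; split_ifs <;> omega
    rw [hc2, ht2]; exact this
  obtain ⟨e, hde, hte⟩ := Relation.church_rosser diamond hd hr
  have h1 : e = d := stable_reaches_eq hstable hde
  have h2 : e = tgt := stable_reaches_eq hstgt hte
  rw [← h1, h2]
end

section
/- For n = 2m+1 odd with m ≥ 0, the stabilization of the configuration with n chips at the origin of Z is the configuration with one chip at each vertex in [-m, m]. -/
namespace ChipAux

/-- the result of firing at j as a function -/
def fire (c : ℤ → ℕ) (j : ℤ) : ℤ → ℕ :=
  fun i => if i = j then c j - 2 else if i = j - 1 then c i + 1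
    else if i = j + 1 then c i + 1 else c i

lemma fireAt_fire {c : ℤ → ℕ} {j : ℤ} (h : 2 ≤ c j) : FireAt c j (fire c j) := by
  refine ⟨h, ?_, ?_, ?_, ?_⟩
  · simp only [fire]; split_ifs <;> omega
  · simp only [fire]; split_ifs <;> omega
  · simp only [fire]; split_ifs <;> omega
  · intro i h1 h2 h3; simp only [fire]; split_ifs <;> omega

lemma fireAt_eq {c c' : ℤ → ℕ} {j : ℤ} (h : FireAt c j c') : c' = fire c j := by
  obtain ⟨h2, ha, hb, hc, ho⟩ := h
  funext i
  simp only [fire]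
  split_ifs with h1 h2' h3'
  · subst h1; exact hc
  · subst h2'; exact ha
  · subst h3'; exact hb
  · exact ho i h2' h1 h3'

lemma step_of (c : ℤ → ℕ) (j : ℤ) (h2 : 2 ≤ c j) {d : ℤ → ℕ} (hd : fire c j = d) :
    Step c d := ⟨j, hd ▸ fireAt_fire h2⟩

lemma fire_other {c : ℤ → ℕ} {j j' : ℤ} (hne : j' ≠ j) (h : 2 ≤ c j') : 2 ≤ fire c j j' := by
  simp only [fire]; split_ifs <;> omega

lemma fire_comm {c : ℤ → ℕ} {j j' : ℤ} (hj : 2 ≤ c j) (hj' : 2 ≤ c j') (hne : j ≠ j') :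
    fire (fire c j) j' = fire (fire c j') j := by
  funext i
  simp only [fire]
  split_ifs <;> omega

lemma step_to_stable {c d : ℤ → ℕ} (h : Reaches c d) (hs : Stable d) :
    ∀ c₁, Step c c₁ → Reaches c₁ d := by
  induction h using Relation.ReflTransGen.head_induction_on with
  | refl =>
    rintro c₁ ⟨j, hj⟩
    exact absurd (hs j) (by have := hj.1; omega)
  | head hstep htail ih =>
    rename_i c c₂
    rintro c₁ ⟨j, hj⟩
    obtain ⟨j', hj'⟩ := hstep
    have e1 : c₁ = fire c j := fireAt_eq hj
    have e2 : c₂ = fire c j' := fireAt_eq hj'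
    by_cases hjj : j = j'
    · subst hjj; rw [e1, ← e2]; exact htail
    · have h2a : 2 ≤ fire c j' j := fire_other hjj hj.1
      have h2b : 2 ≤ fire c j j' := fire_other (Ne.symm hjj) hj'.1
      have hst : Step c₂ (fire (fire c j') j) := by
        rw [e2]; exact ⟨j, fireAt_fire h2a⟩
      have hr : Reaches (fire (fire c j') j) d := ih _ hst
      have hst2 : Step c₁ (fire (fire c j') j) := by
        rw [e1, ← fire_comm hj.1 hj'.1 hjj]
        exact ⟨j', fireAt_fire h2b⟩
      exact Relation.ReflTransGen.head hst2 hr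

lemma stable_unique {d d' : ℤ → ℕ} (hs : Stable d) (hs' : Stable d') :
    ∀ {c : ℤ → ℕ}, Reaches c d' → Reaches c d → d = d' := by
  intro c h'
  induction h' using Relation.ReflTransGen.head_induction_on with
  | refl =>
    intro h
    rcases Relation.ReflTransGen.cases_head h with rfl | ⟨c₁, ⟨j, hj⟩, _⟩
    · rfl
    · exact absurd (hs' j) (by have := hj.1; omega)
  | head hstep _ ih =>
    intro h
    exact ih (step_to_stable h hs _ hstep)

lemma fireAt_add {c c' : ℤ → ℕ} {j : ℤ} (e : ℤ → ℕ) (h : FireAt c j c') :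
    FireAt (fun i => c i + e i) j (fun i => c' i + e i) := by
  obtain ⟨h2, ha, hb, hc, ho⟩ := h
  refine ⟨?_, ?_, ?_, ?_, ?_⟩
  · show 2 ≤ c j + e j; omega
  · show c' (j-1) + e (j-1) = c (j-1) + e (j-1) + 1; omega
  · show c' (j+1) + e (j+1) = c (j+1) + e (j+1) + 1; omega
  · show c' j + e j = c j + e j - 2; omega
  · intro i h1 h2' h3
    show c' i + e i = c i + e i
    rw [ho i h1 h2' h3]

lemma reaches_add (e : ℤ → ℕ) {c d : ℤ → ℕ} (h : Reaches c d) :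
    Reaches (fun i => c i + e i) (fun i => d i + e i) := by
  induction h with
  | refl => exact Relation.ReflTransGen.refl
  | tail _ hstep ih =>
    obtain ⟨j, hj⟩ := hstep
    exact Relation.ReflTransGen.tail ih ⟨j, fireAt_add e hj⟩

/-- indicator of interval [a,b] -/
def ind (a b : ℤ) : ℤ → ℕ := fun x => if a ≤ x ∧ x ≤ b then 1 else 0

/-- interval with doubled endpoints -/
def C (k : ℕ) : ℤ → ℕ :=
  fun i => ind (-(k : ℤ)) (k : ℤ) i + (if i = (k : ℤ) then 1 else 0)
    + (if i = -(k : ℤ) then 1 else 0)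

set_option maxHeartbeats 2000000 in
lemma W : ∀ k : ℕ, Reaches (C k) (ind (-(k : ℤ) - 1) ((k : ℤ) + 1)) := by
  intro k
  induction k with
  | zero =>
    refine Relation.ReflTransGen.single (step_of _ 0 ?_ ?_)
    · simp [C, ind]
    · funext i
      simp only [fire, C, ind, Nat.cast_zero, neg_zero]
      split_ifs <;> omega
  | succ k ih =>
    have hk1 : ((k + 1 : ℕ) : ℤ) = (k : ℤ) + 1 := by push_cast; ring
    have h1 : Step (C (k + 1)) (fire (C (k + 1)) ((k : ℤ) + 1)) := by
      refine step_of _ _ ?_ rfl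
      simp only [C, ind, hk1]
      split_ifs <;> omega
    have h2 : Step (fire (C (k + 1)) ((k : ℤ) + 1))
        (fire (fire (C (k + 1)) ((k : ℤ) + 1)) (-(k : ℤ) - 1)) := by
      refine step_of _ _ ?_ rfl
      simp only [fire, C, ind, hk1]
      split_ifs <;> omega
    have h3 : fire (fire (C (k + 1)) ((k : ℤ) + 1)) (-(k : ℤ) - 1)
        = fun i => C k i + ((if i = (k : ℤ) + 2 then 1 else 0)
            + (if i = -(k : ℤ) - 2 then 1 else 0)) := by
      funext i
      simp only [fire, C, ind, hk1]
      split_ifs <;> omega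
    have h4 := reaches_add (fun i => (if i = (k : ℤ) + 2 then 1 else 0)
        + (if i = -(k : ℤ) - 2 then 1 else 0)) ih
    have h5 : (fun i => ind (-(k : ℤ) - 1) ((k : ℤ) + 1) i
        + ((if i = (k : ℤ) + 2 then 1 else 0) + (if i = -(k : ℤ) - 2 then 1 else 0)))
        = ind (-((k + 1 : ℕ) : ℤ) - 1) (((k + 1 : ℕ) : ℤ) + 1) := by
      funext i
      simp only [ind, hk1]
      split_ifs <;> omega
    refine Relation.ReflTransGen.head h1 (Relation.ReflTransGen.head h2 ?_)
    rw [h3, ← h5]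
    exact h4

/-- the moving-pair lemma: interval [-m,m] of ones plus extra chips at ±k stabilizes -/
lemma Pchain : ∀ j m k : ℕ, k + j = m →
    Reaches (fun i => ind (-(m : ℤ)) (m : ℤ) i + (if i = (k : ℤ) then 1 else 0)
      + (if i = -(k : ℤ) then 1 else 0)) (ind (-(m : ℤ) - 1) ((m : ℤ) + 1)) := by
  intro j
  induction j with
  | zero =>
    intro m k hkm
    have : k = m := by omega
    subst this
    exact W k
  | succ j ih =>
    intro m k hkm
    have hkm' : (k : ℤ) < (m : ℤ) := by push_cast; omega
    have e1 : (fun i => ind (-(m : ℤ)) (m : ℤ) i + (if i = (k : ℤ) then 1 else 0)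
        + (if i = -(k : ℤ) then 1 else 0))
        = fun i => C k i + (if ((-(m:ℤ) ≤ i ∧ i ≤ (m:ℤ)) ∧ ¬(-(k:ℤ) ≤ i ∧ i ≤ (k:ℤ)))
            then 1 else 0) := by
      funext i
      simp only [C, ind]
      split_ifs <;> omega
    have h4 := reaches_add (fun i => (if ((-(m:ℤ) ≤ i ∧ i ≤ (m:ℤ))
        ∧ ¬(-(k:ℤ) ≤ i ∧ i ≤ (k:ℤ))) then 1 else 0)) (W k)
    have e2 : (fun i => ind (-(k : ℤ) - 1) ((k : ℤ) + 1) i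
        + (if ((-(m:ℤ) ≤ i ∧ i ≤ (m:ℤ)) ∧ ¬(-(k:ℤ) ≤ i ∧ i ≤ (k:ℤ))) then 1 else 0))
        = fun i => ind (-(m : ℤ)) (m : ℤ) i + (if i = ((k+1 : ℕ) : ℤ) then 1 else 0)
          + (if i = -((k+1 : ℕ) : ℤ) then 1 else 0) := by
      funext i
      simp only [ind]
      push_cast
      split_ifs <;> omega
    rw [e1]
    refine Relation.ReflTransGen.trans (e2 ▸ h4) (ih m (k + 1) (by omega))

lemma G : ∀ m : ℕ, Reaches (fun x : ℤ => if x = 0 then 2 * m + 1 else 0)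
    (ind (-(m : ℤ)) (m : ℤ)) := by
  intro m
  induction m with
  | zero =>
    have : (fun x : ℤ => if x = 0 then 2 * 0 + 1 else 0) = ind (-(0 : ℕ) : ℤ) ((0:ℕ) : ℤ) := by
      funext x
      simp only [ind, Nat.cast_zero, neg_zero]
      split_ifs <;> omega
    rw [this]
    exact Relation.ReflTransGen.refl
  | succ m ih =>
    have e1 : (fun x : ℤ => if x = 0 then 2 * (m + 1) + 1 else 0)
        = fun x : ℤ => (if x = 0 then 2 * m + 1 else 0) + (if x = 0 then 2 else 0) := by
      funext x
      split_ifs <;> omega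
    have h2 := reaches_add (fun x : ℤ => if x = 0 then 2 else 0) ih
    have e2 : (fun i => ind (-(m : ℤ)) (m : ℤ) i + (if i = 0 then 2 else 0))
        = fun i => ind (-(m : ℤ)) (m : ℤ) i + (if i = ((0:ℕ) : ℤ) then 1 else 0)
          + (if i = -((0:ℕ) : ℤ) then 1 else 0) := by
      funext i
      simp only [ind, Nat.cast_zero, neg_zero]
      split_ifs <;> omega
    have h3 := Pchain m m 0 (by omega)
    have e3 : ind (-(m : ℤ) - 1) ((m : ℤ) + 1)
        = ind (-((m+1 : ℕ) : ℤ)) (((m+1 : ℕ)) : ℤ) := by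
      funext i
      simp only [ind]
      push_cast
      split_ifs <;> omega
    rw [e1]
    exact Relation.ReflTransGen.trans h2 (e2 ▸ e3 ▸ h3)

end ChipAux

theorem stmt_9 (n m : ℕ) (hn : n = 2 * m + 1)
    (c : ℤ → ℕ) (hc : c = fun x => if x = 0 then n else 0)
    (d : ℤ → ℕ) (hd : Reaches c d) (hstable : Stable d) :
    d = fun x => if -(m : ℤ) ≤ x ∧ x ≤ (m : ℤ) then 1 else 0 := by
  subst hn hc
  have htarget : Stable (ChipAux.ind (-(m : ℤ)) (m : ℤ)) := by
    intro i
    simp only [ChipAux.ind]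
    split <;> omega
  have hreach := ChipAux.G m
  exact ChipAux.stable_unique hstable htarget hreach hd
end

section
/- Let m = ⌊n/2⌋ and let j ∈ Z. In any sequence of firings stabilizing the configuration of n chips at the origin of Z, the number of times vertex j fires equals (m+1−|j|)(m−|j|)/2 if |j| < m, and 0 otherwise. -/
def Tn : ℕ → ℕ
  | 0 => 0
  | r + 1 => Tn r + r + 1

lemma twoTn (r : ℕ) : 2 * Tn r = r * (r + 1) := by
  induction r with
  | zero => rfl
  | succ r ih => simp only [Tn]; nlinarith [ih]

lemma Tn_pred (r : ℕ) (h : 1 ≤ r) : Tn r = Tn (r - 1) + r := by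
  cases r with
  | zero => omega
  | succ s => simp only [Tn, Nat.add_sub_cancel]; omega

def Ust (m : ℕ) (i : ℤ) : ℕ := if i.natAbs ≤ m then Tn (m - i.natAbs) else 0

def ssd (n m : ℕ) (i : ℤ) : ℕ :=
  if i = 0 then n - 2 * m else if i.natAbs ≤ m then 1 else 0

lemma ssd_le_one (n m : ℕ) (hm : m = n / 2) (i : ℤ) : ssd n m i ≤ 1 := by
  unfold ssd; split_ifs <;> omega

lemma Ust_eq_zero (m : ℕ) (i : ℤ) (h : m < i.natAbs) : Ust m i = 0 := by
  unfold Ust; rw [if_neg (by omega)]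

lemma key_aux (m a : ℕ) (ha1 : 1 ≤ a) :
    (if a - 1 ≤ m then Tn (m - (a - 1)) else 0) +
      (if a + 1 ≤ m then Tn (m - (a + 1)) else 0) =
      2 * (if a ≤ m then Tn (m - a) else 0) + (if a ≤ m then 1 else 0) := by
  rcases lt_trichotomy a m with hc | hc | hc
  · have v1 : (if a - 1 ≤ m then Tn (m - (a - 1)) else 0) = Tn ((m - a) + 1) := by
      have h : m - (a - 1) = (m - a) + 1 := by omega
      rw [if_pos (by omega), h]
    have v2 : (if a + 1 ≤ m then Tn (m - (a + 1)) else 0) = Tn ((m - a) - 1) := by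
      have h : m - (a + 1) = (m - a) - 1 := by omega
      rw [if_pos (by omega), h]
    rw [v1, v2, if_pos (by omega), if_pos (by omega)]
    have hT2 : Tn ((m - a) + 1) = Tn (m - a) + (m - a) + 1 := rfl
    have hT1 : Tn (m - a) = Tn ((m - a) - 1) + (m - a) := Tn_pred _ (by omega)
    omega
  · subst hc
    have v1 : (if a - 1 ≤ a then Tn (a - (a - 1)) else 0) = 1 := by
      rw [if_pos (by omega)]
      have : a - (a - 1) = 1 := by omega
      rw [this]; rfl
    rw [v1, if_neg (by omega), if_pos le_rfl, if_pos le_rfl, Nat.sub_self]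
    rfl
  · have v1 : (if a - 1 ≤ m then Tn (m - (a - 1)) else 0) = 0 := by
      split_ifs with h
      · have : m - (a - 1) = 0 := by omega
        rw [this]; rfl
      · rfl
    rw [v1, if_neg (by omega), if_neg (by omega), if_neg (by omega)]

lemma key (n m : ℕ) (hm : m = n / 2) (i : ℤ) :
    (if i = 0 then n else 0) + Ust m (i - 1) + Ust m (i + 1) = 2 * Ust m i + ssd n m i := by
  by_cases hi : i = 0
  · subst hi
    have hs0 : ssd n m 0 = n - 2 * m := by rw [ssd, if_pos rfl]
    rw [if_pos rfl, hs0]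
    have e1 : Ust m (0 - 1) = if 1 ≤ m then Tn (m - 1) else 0 := by
      have h : ((0 : ℤ) - 1).natAbs = 1 := rfl
      unfold Ust; rw [h]
    have e2 : Ust m (0 + 1) = if 1 ≤ m then Tn (m - 1) else 0 := by
      have h : ((0 : ℤ) + 1).natAbs = 1 := rfl
      unfold Ust; rw [h]
    have e3 : Ust m 0 = Tn m := by
      have h : (0 : ℤ).natAbs = 0 := rfl
      unfold Ust; rw [h, if_pos (Nat.zero_le m), Nat.sub_zero]
    rw [e1, e2, e3]
    rcases Nat.eq_zero_or_pos m with h | h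
    · subst h
      rw [if_neg (by omega)]
      have hT : Tn 0 = 0 := rfl
      omega
    · rw [if_pos (show 1 ≤ m by omega)]
      have hT := Tn_pred m h
      omega
  · rw [if_neg hi]
    have hssd : ssd n m i = if i.natAbs ≤ m then 1 else 0 := by rw [ssd, if_neg hi]
    rw [hssd]
    have ha1 : 1 ≤ i.natAbs := by omega
    have hnb : ((i - 1).natAbs = i.natAbs - 1 ∧ (i + 1).natAbs = i.natAbs + 1) ∨
        ((i - 1).natAbs = i.natAbs + 1 ∧ (i + 1).natAbs = i.natAbs - 1) := by omega
    have hmain := key_aux m i.natAbs ha1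
    unfold Ust
    rcases hnb with ⟨e1, e2⟩ | ⟨e1, e2⟩ <;> rw [e1, e2] <;> omega

lemma fire_unique {c c' : ℤ → ℕ} {j j' : ℤ} (h : FireAt c j c') (h' : FireAt c j' c') :
    j = j' := by
  obtain ⟨h2, ha, hb, hc, hd⟩ := h
  obtain ⟨h2', ha', hb', hc', hd'⟩ := h'
  by_contra hne
  rcases eq_or_ne j (j' - 1) with he | he1
  · have := ha'
    rw [← he] at this
    omega
  rcases eq_or_ne j (j' + 1) with he | he2
  · have := hb'
    rw [← he] at this
    omega
  · have := hd' j he1 hne he2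
    omega

open Classical in
noncomputable def uc (f : ℕ → (ℤ → ℕ)) (t : ℕ) (i : ℤ) : ℕ :=
  ((Finset.range t).filter (fun t' => FireAt (f t') i (f (t' + 1)))).card

open Classical in
lemma uc_succ (f : ℕ → (ℤ → ℕ)) (t : ℕ) (jt : ℤ) (hj : FireAt (f t) jt (f (t + 1)))
    (i : ℤ) : uc f (t + 1) i = uc f t i + if i = jt then 1 else 0 := by
  unfold uc
  rw [Finset.range_add_one, Finset.filter_insert]
  by_cases hij : i = jt
  · rw [if_pos (show FireAt (f t) i (f (t + 1)) from hij ▸ hj), if_pos hij,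
      Finset.card_insert_of_notMem (by simp)]
  · rw [if_neg (show ¬ FireAt (f t) i (f (t + 1)) from fun h => hij (fire_unique h hj)),
      if_neg hij, add_zero]

open Classical in
theorem stmt_11 (n : ℕ) (m : ℕ) (hm : m = n / 2) (j : ℤ)
    (f : ℕ → (ℤ → ℕ)) (N : ℕ)
    (h0 : f 0 = fun x => if x = 0 then n else 0)
    (hstep : ∀ t < N, Step (f t) (f (t + 1)))
    (hstable : Stable (f N)) :
    ((Finset.range N).filter (fun t => FireAt (f t) j (f (t + 1)))).card =
      if j.natAbs < m then (m + 1 - j.natAbs) * (m - j.natAbs) / 2 else 0 := by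
  have hstepu : ∀ t, t < N → ∃ jt, FireAt (f t) jt (f (t + 1)) ∧
      ∀ i, uc f (t + 1) i = uc f t i + if i = jt then 1 else 0 := by
    intro t ht
    obtain ⟨jt, hj⟩ := hstep t ht
    exact ⟨jt, hj, fun i => uc_succ f t jt hj i⟩
  -- conservation law
  have hcons : ∀ t, t ≤ N → ∀ i : ℤ,
      f t i + 2 * uc f t i = (if i = 0 then n else 0) + uc f t (i - 1) + uc f t (i + 1) := by
    intro t
    induction t with
    | zero =>
      intro _ i
      rw [h0]
      simp [uc]
    | succ t ih =>
      intro ht i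
      obtain ⟨jt, hj, hu⟩ := hstepu t (by omega)
      have ihi := ih (by omega) i
      obtain ⟨hj2, hjm, hjp, hjj, hjo⟩ := hj
      rw [hu i, hu (i - 1), hu (i + 1)]
      by_cases h1 : i = jt - 1
      · have hfi : f (t + 1) i = f t i + 1 := by rw [h1]; exact hjm
        rw [if_neg (show ¬(i = jt) by omega), if_neg (show ¬(i - 1 = jt) by omega),
          if_pos (show i + 1 = jt by omega)]
        omega
      by_cases h2 : i = jt
      · have hfi : f (t + 1) i + 2 = f t i := by rw [h2]; omega
        rw [if_pos h2, if_neg (show ¬(i - 1 = jt) by omega),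
          if_neg (show ¬(i + 1 = jt) by omega)]
        omega
      by_cases h3 : i = jt + 1
      · have hfi : f (t + 1) i = f t i + 1 := by rw [h3]; exact hjp
        rw [if_neg h2, if_pos (show i - 1 = jt by omega),
          if_neg (show ¬(i + 1 = jt) by omega)]
        omega
      · have hfi : f (t + 1) i = f t i := hjo i h1 h2 h3
        rw [if_neg h2, if_neg (show ¬(i - 1 = jt) by omega),
          if_neg (show ¬(i + 1 = jt) by omega)]
        omega
  -- least action principle: the odometer is at most Ust
  have hlap : ∀ t, t ≤ N → ∀ i : ℤ, uc f t i ≤ Ust m i := by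
    intro t
    induction t with
    | zero => intro _ i; simp [uc]
    | succ t ih =>
      intro ht i
      have ht' : t ≤ N := by omega
      obtain ⟨jt, hj, hu⟩ := hstepu t (by omega)
      rw [hu i]
      by_cases hij : i = jt
      · rw [if_pos hij]
        subst hij
        by_contra hcon
        push_neg at hcon
        have h1 : uc f t i = Ust m i := by have := ih ht' i; omega
        have h2 := hcons t ht' i
        have h3 := key n m hm i
        have h4 := ih ht' (i - 1)
        have h5 := ih ht' (i + 1)
        have h6 := ssd_le_one n m hm i
        have hj2 := hj.1
        omega
      · rw [if_neg hij, add_zero]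
        exact ih ht' i
  have hle : ∀ i, uc f N i ≤ Ust m i := hlap N le_rfl
  -- reverse inequality via maximum principle
  have hfinal : ∀ i, uc f N i = Ust m i := by
    by_contra hcon
    push_neg at hcon
    obtain ⟨i0, hi0⟩ := hcon
    set d : ℤ → ℕ := fun i => Ust m i - uc f N i with hd
    set S : Finset ℤ := Finset.Icc (-(m : ℤ)) (m : ℤ) with hS
    set M : ℕ := S.sup d with hM
    have hdle : ∀ i, d i ≤ Ust m i := fun i => Nat.sub_le _ _
    have hMax : ∀ i, d i ≤ M := by
      intro i
      by_cases hiS : i ∈ S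
      · exact Finset.le_sup hiS
      · have hna : m < i.natAbs := by
          rw [hS, Finset.mem_Icc] at hiS; omega
        have hz := Ust_eq_zero m i hna
        have : d i = 0 := by simp only [hd]; omega
        omega
    have hM1 : 1 ≤ M := by
      have h1 : 1 ≤ d i0 := by
        have := hle i0
        simp only [hd]
        omega
      have := hMax i0
      omega
    have hineq : ∀ i : ℤ, 2 * d i + ssd n m i ≤ d (i - 1) + d (i + 1) + 1 := by
      intro i
      have h2 := hcons N le_rfl i
      have h3 := key n m hm i
      have hs := hstable i
      have hl1 := hle (i - 1)
      have hl2 := hle (i + 1)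
      have hl3 := hle i
      simp only [hd]
      omega
    have hprop : ∀ i : ℤ, i ≠ 0 → d i = M → d (i - 1) = M ∧ d (i + 1) = M := by
      intro i hi hdM
      have hU1 : 1 ≤ Ust m i := by have := hdle i; omega
      have ham : i.natAbs ≤ m := by
        by_contra h
        push_neg at h
        rw [Ust_eq_zero m i h] at hU1
        omega
      have hss : ssd n m i = 1 := by rw [ssd, if_neg hi, if_pos ham]
      have hq := hineq i
      have hq1 := hMax (i - 1)
      have hq2 := hMax (i + 1)
      omega
    have hright : ∀ k : ℕ, ∀ i : ℤ, 1 ≤ i → d i = M → d (i + k) = M := by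
      intro k
      induction k with
      | zero => intro i _ h; simpa using h
      | succ k ih =>
        intro i hi h
        have h2 := (hprop i (by omega) h).2
        have h3 := ih (i + 1) (by omega) h2
        have e : i + ((k + 1 : ℕ) : ℤ) = (i + 1) + (k : ℤ) := by push_cast; ring
        rw [e]
        exact h3
    have hleft : ∀ k : ℕ, ∀ i : ℤ, i ≤ -1 → d i = M → d (i - k) = M := by
      intro k
      induction k with
      | zero => intro i _ h; simpa using h
      | succ k ih =>
        intro i hi h
        have h2 := (hprop i (by omega) h).1
        have h3 := ih (i - 1) (by omega) h2
        have e : i - ((k + 1 : ℕ) : ℤ) = (i - 1) - (k : ℤ) := by push_cast; ring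
        rw [e]
        exact h3
    have hnop : ∀ i : ℤ, 1 ≤ i → d i ≠ M := by
      intro i hi hdM
      have h1 := hright m i hi hdM
      have hz : Ust m (i + (m : ℤ)) = 0 := Ust_eq_zero m _ (by omega)
      have h2 : d (i + (m : ℤ)) = 0 := by simp only [hd]; omega
      omega
    have hnon : ∀ i : ℤ, i ≤ -1 → d i ≠ M := by
      intro i hi hdM
      have h1 := hleft m i hi hdM
      have hz : Ust m (i - (m : ℤ)) = 0 := Ust_eq_zero m _ (by omega)
      have h2 : d (i - (m : ℤ)) = 0 := by simp only [hd]; omega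
      omega
    obtain ⟨iM, hiMS, hMeq⟩ := Finset.exists_mem_eq_sup S
      (⟨0, by rw [hS, Finset.mem_Icc]; omega⟩ : S.Nonempty) d
    rcases lt_trichotomy iM 0 with h | h | h
    · exact hnon iM (by omega) hMeq.symm
    · have hd0 : d (0 : ℤ) = M := by rw [← h]; exact hMeq.symm
      have hq := hineq 0
      have hm1 : d ((0 : ℤ) - 1) ≠ M := hnon _ (by omega)
      have hp1 : d ((0 : ℤ) + 1) ≠ M := hnop _ (by omega)
      have hq1 := hMax ((0 : ℤ) - 1)
      have hq2 := hMax ((0 : ℤ) + 1)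
      omega
    · exact hnop iM (by omega) hMeq.symm
  have hgoal : ((Finset.range N).filter (fun t => FireAt (f t) j (f (t + 1)))).card
      = uc f N j := rfl
  rw [hgoal, hfinal j]
  by_cases hc : j.natAbs < m
  · rw [if_pos hc]
    unfold Ust
    rw [if_pos (by omega)]
    have e1 : m + 1 - j.natAbs = (m - j.natAbs) + 1 := by omega
    rw [e1]
    have e2 : ((m - j.natAbs) + 1) * (m - j.natAbs) = 2 * Tn (m - j.natAbs) := by
      rw [Nat.mul_comm]
      exact (twoTn _).symm
    rw [e2]
    omega
  · rw [if_neg hc]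
    unfold Ust
    split_ifs with h
    · have : m - j.natAbs = 0 := by omega
      rw [this]
      rfl
    · rfl
end

section
/- In labeled chip-firing on Z starting from n labeled chips (1),…,(n) at the origin, if configuration 𝒞 is reachable from the initial configuration, then for every 1 ≤ k ≤ n the position of chip (k) in 𝒞 satisfies −⌊(n+1−k)/2⌋ ≤ 𝒞(k) ≤ ⌊k/2⌋. -/
/-- A labeled chip-firing move on `ℤ` for chips labeled `1,…,n`:
choose `a < b` in `[1,n]` occupying the same vertex, move `(a)` left and `(b)` right. -/
def LStep (n : ℕ) (C D : ℕ → ℤ) : Prop :=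
  ∃ a b : ℕ, 1 ≤ a ∧ a < b ∧ b ≤ n ∧ C a = C b ∧
    D a = C a - 1 ∧ D b = C b + 1 ∧ ∀ k : ℕ, k ≠ a → k ≠ b → D k = C k

/-- reachability by a finite sequence of labeled firing moves -/
def LReaches (n : ℕ) : (ℕ → ℤ) → (ℕ → ℤ) → Prop := Relation.ReflTransGen (LStep n)

/-- the initial configuration with all chips at the origin -/
def Delta : ℕ → ℤ := fun _ => 0

/-- stability: no two chips occupy the same vertex -/
def LStable (n : ℕ) (C : ℕ → ℤ) : Prop :=
  ∀ a b : ℕ, 1 ≤ a → a < b → b ≤ n → C a ≠ C b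

namespace ChipAux

/-- doubled triangular number -/
def T2 (m : ℤ) : ℤ := m * (m + 1)

/-- total excess mass of chips `1..k` above level `t-1` -/
def SS (k : ℕ) (C : ℕ → ℤ) (t : ℤ) : ℤ := ∑ j ∈ Finset.Icc 1 k, max (C j - t + 1) 0

/-- number of chips `1..k` at position `s` -/
def NN (k : ℕ) (C : ℕ → ℤ) (s : ℤ) : ℤ := ∑ j ∈ Finset.Icc 1 k, (if C j = s then (1:ℤ) else 0)

/-- staircase height -/
def qq (k : ℕ) (t : ℤ) : ℤ := max (((k / 2 : ℕ) : ℤ) + 1 - t) 0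

/-- the invariant -/
def Inv (k : ℕ) (C : ℕ → ℤ) : Prop :=
  ∀ t : ℤ, 2 * SS k C t ≤ T2 (qq k t) ∧
    (2 ≤ NN k C (t - 1) → 2 * SS k C t ≤ T2 (qq k t) - 2)

lemma consec_nonneg (z : ℤ) : 0 ≤ z * (z + 1) := by
  rcases le_or_gt 0 z with h | h
  · positivity
  · nlinarith [mul_nonneg (neg_nonneg.2 h.le) (neg_nonneg.2 (by omega : z + 1 ≤ 0))]

lemma T2_nonneg (m : ℤ) (hm : 0 ≤ m) : 0 ≤ T2 m := by
  unfold T2; positivity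

lemma T2_even (m : ℤ) : Even (T2 m) := Int.even_mul_succ_self m

lemma even_le_sub {a b : ℤ} (hea : Even a) (heb : Even b) (h : a ≤ b - 1) : a ≤ b - 2 := by
  obtain ⟨x, hx⟩ := hea; obtain ⟨y, hy⟩ := heb; omega

lemma qq_nonneg (k : ℕ) (t : ℤ) : 0 ≤ qq k t := le_max_right _ _

lemma SS_nonneg (k : ℕ) (C : ℕ → ℤ) (t : ℤ) : 0 ≤ SS k C t :=
  Finset.sum_nonneg fun j _ => le_max_right _ _

lemma NN_le_SS (k : ℕ) (C : ℕ → ℤ) (s : ℤ) : NN k C s ≤ SS k C s := by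
  apply Finset.sum_le_sum
  intro _ _
  split_ifs with h
  · simp [h]
  · exact le_max_right _ _

/-- second difference identity -/
lemma SS_id (k : ℕ) (C : ℕ → ℤ) (t : ℤ) :
    SS k C t + SS k C (t + 2) = 2 * SS k C (t + 1) + NN k C t := by
  unfold SS NN
  rw [← Finset.sum_add_distrib, Finset.mul_sum, ← Finset.sum_add_distrib]
  apply Finset.sum_congr rfl
  intro j _
  simp only [max_def]
  split_ifs <;> omega

lemma sum_two_ne {F G : ℕ → ℤ} {s : Finset ℕ} {a b : ℕ} (ha : a ∈ s) (hb : b ∈ s)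
    (hne : a ≠ b) (h : ∀ j ∈ s, j ≠ a → j ≠ b → F j = G j) :
    ∑ j ∈ s, F j = (∑ j ∈ s, G j) + (F a - G a) + (F b - G b) := by
  classical
  have hb' : b ∈ s.erase a := Finset.mem_erase.2 ⟨hne.symm, hb⟩
  rw [← Finset.add_sum_erase s F ha, ← Finset.add_sum_erase _ F hb',
      ← Finset.add_sum_erase s G ha, ← Finset.add_sum_erase _ G hb']
  have heq : ∑ j ∈ (s.erase a).erase b, F j = ∑ j ∈ (s.erase a).erase b, G j := by
    apply Finset.sum_congr rfl
    intro j hj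
    have hj1 := Finset.mem_erase.1 hj
    have hj2 := Finset.mem_erase.1 hj1.2
    exact h j hj2.2 hj2.1 hj1.1
  rw [heq]; ring

lemma sum_one_ne {F G : ℕ → ℤ} {s : Finset ℕ} {a : ℕ} (ha : a ∈ s)
    (h : ∀ j ∈ s, j ≠ a → F j = G j) :
    ∑ j ∈ s, F j = (∑ j ∈ s, G j) + (F a - G a) := by
  classical
  rw [← Finset.add_sum_erase s F ha, ← Finset.add_sum_erase s G ha]
  have heq : ∑ j ∈ s.erase a, F j = ∑ j ∈ s.erase a, G j := by
    apply Finset.sum_congr rfl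
    intro j hj
    have hj1 := Finset.mem_erase.1 hj
    exact h j hj1.2 hj1.1
  rw [heq]; ring

section Fire

variable {k : ℕ} {C D : ℕ → ℤ} {a b : ℕ}

/-- both chips inside the prefix: fire -/
lemma SS_fire (ha : a ∈ Finset.Icc 1 k) (hb : b ∈ Finset.Icc 1 k) (hne : a ≠ b)
    (hCab : C a = C b) (hDa : D a = C a - 1) (hDb : D b = C b + 1)
    (hoff : ∀ j : ℕ, j ≠ a → j ≠ b → D j = C j) (t : ℤ) :
    SS k D t = SS k C t + (if t = C a + 1 then 1 else 0) := by
  unfold SS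
  rw [sum_two_ne ha hb hne (fun j _ hja hjb => by rw [hoff j hja hjb])]
  rw [hDa, hDb, ← hCab]
  have key : (max (C a - 1 - t + 1) 0 - max (C a - t + 1) 0) +
      (max (C a + 1 - t + 1) 0 - max (C a - t + 1) 0) = (if t = C a + 1 then 1 else 0) := by
    split_ifs <;> omega
  omega

lemma NN_fire (ha : a ∈ Finset.Icc 1 k) (hb : b ∈ Finset.Icc 1 k) (hne : a ≠ b)
    (hCab : C a = C b) (hDa : D a = C a - 1) (hDb : D b = C b + 1)
    (hoff : ∀ j : ℕ, j ≠ a → j ≠ b → D j = C j) (s : ℤ) :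
    NN k D s = NN k C s + (if s = C a - 1 then 1 else 0) + (if s = C a + 1 then 1 else 0)
      - 2 * (if s = C a then 1 else 0) := by
  unfold NN
  rw [sum_two_ne ha hb hne (fun j _ hja hjb => by rw [hoff j hja hjb])]
  rw [hDa, hDb, ← hCab]
  split_ifs <;> omega

lemma two_le_NN (ha : a ∈ Finset.Icc 1 k) (hb : b ∈ Finset.Icc 1 k) (hne : a ≠ b)
    (hCab : C a = C b) : 2 ≤ NN k C (C a) := by
  classical
  unfold NN
  have hb' : b ∈ (Finset.Icc 1 k).erase a := Finset.mem_erase.2 ⟨hne.symm, hb⟩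
  rw [← Finset.add_sum_erase _ _ ha, ← Finset.add_sum_erase _ _ hb']
  have h1 : (if C a = C a then (1:ℤ) else 0) = 1 := by simp
  have h2 : (if C b = C a then (1:ℤ) else 0) = 1 := by simp [hCab]
  have h3 : (0:ℤ) ≤ ∑ j ∈ ((Finset.Icc 1 k).erase a).erase b,
      (if C j = C a then (1:ℤ) else 0) := by
    apply Finset.sum_nonneg; intro j _; split_ifs <;> norm_num
  rw [h1, h2]; linarith

end Fire

/-- q at the firing level is at least 1, from the conditional clause -/
lemma q_pos {k : ℕ} {C : ℕ → ℤ} (hI : Inv k C) {i : ℤ} (hN : 2 ≤ NN k C i) :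
    1 ≤ ((k / 2 : ℕ) : ℤ) - i ∧ 2 * SS k C (i + 1) ≤ T2 (qq k (i + 1)) - 2 := by
  have hc := (hI (i + 1)).2 (by simpa using hN)
  refine ⟨?_, hc⟩
  by_contra hq
  have hq0 : qq k (i + 1) = 0 := by unfold qq; omega
  rw [hq0] at hc
  have := SS_nonneg k C (i + 1)
  simp [T2] at hc
  omega

/-- main preservation lemma -/
lemma preserve {n k : ℕ} {C D : ℕ → ℤ} (hstep : LStep n C D) (hI : Inv k C) : Inv k D := by
  obtain ⟨a, b, ha1, hab, hbn, hCab, hDa, hDb, hoff⟩ := hstep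
  rcases le_or_gt b k with hbk | hbk
  · -- fire case : both a b ≤ k
    have ha : a ∈ Finset.Icc 1 k := Finset.mem_Icc.2 ⟨ha1, by omega⟩
    have hb : b ∈ Finset.Icc 1 k := Finset.mem_Icc.2 ⟨by omega, hbk⟩
    have hne : a ≠ b := by omega
    have hSS := SS_fire ha hb hne hCab hDa hDb hoff
    have hNN := NN_fire ha hb hne hCab hDa hDb hoff
    have hN2 : 2 ≤ NN k C (C a) := two_le_NN ha hb hne hCab
    obtain ⟨hMq, hcond1⟩ := q_pos hI hN2
    have q1 : qq k (C a + 1) = ((k / 2 : ℕ) : ℤ) - C a := by unfold qq; omega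
    intro t
    constructor
    · -- unconditional
      rw [hSS t]
      by_cases ht : t = C a + 1
      · subst ht
        rw [if_pos rfl]
        linarith
      · rw [if_neg ht]
        simpa using (hI t).1
    · -- conditional
      intro hND
      rw [hNN (t - 1)] at hND
      rw [hSS t]
      by_cases h1 : t - 1 = C a
      · -- t = C a + 1, N_C(C a) ≥ 4
        have ht : t = C a + 1 := by omega
        subst ht
        rw [if_pos rfl]
        have e11 : C a + 1 - 1 = C a := by ring
        rw [e11] at hND
        rw [if_neg (by omega), if_neg (by omega), if_pos (by omega)] at hND
        have hN4 : 4 ≤ NN k C (C a) := by omega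
        have hid := SS_id k C (C a)
        have h0 : 2 * SS k C (C a) ≤ T2 (qq k (C a + 1) + 1) := by
          have h := (hI (C a)).1
          have hqi : qq k (C a) = qq k (C a + 1) + 1 := by unfold qq; omega
          rwa [hqi] at h
        have h2 : 2 * SS k C (C a + 2) ≤ T2 (qq k (C a + 1) - 1) := by
          have h := (hI (C a + 2)).1
          have hqi : qq k (C a + 2) = qq k (C a + 1) - 1 := by unfold qq; omega
          rwa [hqi] at h
        have hTT : T2 (qq k (C a + 1) + 1) + T2 (qq k (C a + 1) - 1)
            = 2 * T2 (qq k (C a + 1)) + 2 := by unfold T2; ring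
        have key : 2 * SS k C (C a + 1) ≤ T2 (qq k (C a + 1)) - 3 := by omega
        have key2 : 2 * SS k C (C a + 1) ≤ T2 (qq k (C a + 1)) - 4 := by
          obtain ⟨x, hx⟩ := T2_even (qq k (C a + 1))
          omega
        omega
      · by_cases h2 : t - 1 = C a + 1
        · -- t = C a + 2, have a chip at C a + 1 in C
          have ht : t = C a + 2 := by omega
          subst ht
          rw [if_neg (by omega)]
          have e21 : C a + 2 - 1 = C a + 1 := by ring
          rw [e21] at hND
          rw [if_neg (by omega), if_pos (by omega), if_neg (by omega)] at hND
          have hNc : 1 ≤ NN k C (C a + 1) := by omega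
          have hS1 : 1 ≤ SS k C (C a + 1) := by
            have := NN_le_SS k C (C a + 1)
            omega
          have hq2 : 1 ≤ ((k / 2 : ℕ) : ℤ) - C a - 1 := by
            by_contra hq
            have hq11 : qq k (C a + 1) = 1 := by unfold qq; omega
            rw [hq11] at hcond1
            simp [T2] at hcond1
            omega
          have hid := SS_id k C (C a + 1)
          have hb0 : 2 * SS k C (C a + 1) ≤ T2 (qq k (C a + 2) + 1) - 2 := by
            have hqi : qq k (C a + 1) = qq k (C a + 2) + 1 := by unfold qq; omega
            rwa [hqi] at hcond1
          have hb2 : 2 * SS k C (C a + 1 + 2) ≤ T2 (qq k (C a + 2) - 1) := by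
            have h := (hI (C a + 3)).1
            have hqi : qq k (C a + 3) = qq k (C a + 2) - 1 := by unfold qq; omega
            have h13 : C a + 1 + 2 = C a + 3 := by ring
            rw [h13]
            rwa [hqi] at h
          have hTT : T2 (qq k (C a + 2) + 1) + T2 (qq k (C a + 2) - 1)
              = 2 * T2 (qq k (C a + 2)) + 2 := by unfold T2; ring
          have key : 2 * SS k C (C a + 2) ≤ T2 (qq k (C a + 2)) - 1 := by
            have h12 : C a + 1 + 1 = C a + 2 := by ring
            rw [h12] at hid
            omega
          have fin := even_le_sub (even_two_mul _) (T2_even _) key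
          omega
        · by_cases h3 : t - 1 = C a - 1
          · -- t = C a : a chip sits at C a - 1 in C
            have ht : t = C a := by omega
            subst ht
            rw [if_neg (by omega)]
            rw [if_pos (by omega), if_neg (by omega), if_neg (by omega)] at hND
            have hNc : 1 ≤ NN k C (C a - 1) := by omega
            have hid := SS_id k C (C a - 1)
            have hb0 : 2 * SS k C (C a - 1) ≤ T2 (qq k (C a) + 1) := by
              have h := (hI (C a - 1)).1
              have hqi : qq k (C a - 1) = qq k (C a) + 1 := by unfold qq; omega
              rwa [hqi] at h
            have hb2 : 2 * SS k C (C a + 1) ≤ T2 (qq k (C a) - 1) - 2 := by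
              have hqi : qq k (C a + 1) = qq k (C a) - 1 := by unfold qq; omega
              rwa [hqi] at hcond1
            have hTT : T2 (qq k (C a) + 1) + T2 (qq k (C a) - 1)
                = 2 * T2 (qq k (C a)) + 2 := by unfold T2; ring
            have key : 2 * SS k C (C a) ≤ T2 (qq k (C a)) - 1 := by
              have e1 : C a - 1 + 2 = C a + 1 := by ring
              have e2 : C a - 1 + 1 = C a := by ring
              rw [e1, e2] at hid
              omega
            have fin := even_le_sub (even_two_mul _) (T2_even _) key
            omega
          · -- unchanged level
            rw [if_neg (by omega), if_neg (by omega), if_neg (by omega)] at hND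
            have h := (hI t).2 (by omega)
            rw [if_neg (by omega)]
            omega
  · rcases le_or_gt a k with hak | hak
    · -- leak case : a ≤ k < b
      have ha : a ∈ Finset.Icc 1 k := Finset.mem_Icc.2 ⟨ha1, hak⟩
      have hoffb : ∀ j ∈ Finset.Icc 1 k, j ≠ a → D j = C j := by
        intro j hj hja
        have hjb : j ≠ b := by
          have := (Finset.mem_Icc.1 hj).2
          omega
        exact hoff j hja hjb
      have hSS : ∀ t : ℤ, SS k D t = SS k C t - (if t ≤ C a then 1 else 0) := by
        intro t
        unfold SS
        rw [sum_one_ne ha (fun j hj hja => by rw [hoffb j hj hja])]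
        rw [hDa]
        have key : max (C a - 1 - t + 1) 0 - max (C a - t + 1) 0
            = -(if t ≤ C a then 1 else 0) := by
          split_ifs <;> omega
        omega
      have hNN : ∀ s : ℤ, NN k D s = NN k C s + (if s = C a - 1 then 1 else 0)
          - (if s = C a then 1 else 0) := by
        intro s
        unfold NN
        rw [sum_one_ne ha (fun j hj hja => by rw [hoffb j hj hja])]
        rw [hDa]
        split_ifs <;> omega
      intro t
      constructor
      · rw [hSS t]
        have h := (hI t).1
        split_ifs <;> omega
      · intro hND
        rw [hNN (t - 1)] at hND
        rw [hSS t]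
        by_cases h1 : t - 1 = C a - 1
        · -- t = C a : use unconditional at C a, minus 1
          have ht : t = C a := by omega
          subst ht
          have h := (hI (C a)).1
          rw [if_pos (le_refl (C a))]
          omega
        · by_cases h2 : t - 1 = C a
          · -- t = C a + 1 : then N_C(C a) ≥ 3
            rw [if_neg (by omega), if_pos (by omega)] at hND
            have hNc : 2 ≤ NN k C (t - 1) := by omega
            have h := (hI t).2 hNc
            split_ifs <;> omega
          · rw [if_neg h1, if_neg h2] at hND
            have h := (hI t).2 (by omega)
            split_ifs <;> omega
    · -- both outside: prefix unchanged
      have hDC : ∀ j ∈ Finset.Icc 1 k, D j = C j := by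
        intro j hj
        have hjk := (Finset.mem_Icc.1 hj).2
        exact hoff j (by omega) (by omega)
      have hSS : ∀ t : ℤ, SS k D t = SS k C t := by
        intro t; unfold SS
        exact Finset.sum_congr rfl fun j hj => by rw [hDC j hj]
      have hNN : ∀ s : ℤ, NN k D s = NN k C s := by
        intro s; unfold NN
        exact Finset.sum_congr rfl fun j hj => by rw [hDC j hj]
      intro t
      rw [hSS t, hNN (t - 1)]
      exact hI t

/-- the invariant holds initially -/
lemma inv_delta (k : ℕ) : Inv k Delta := by
  have hcard : ((Finset.Icc 1 k).card : ℤ) = (k : ℤ) := by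
    rw [Nat.card_Icc]; push_cast; omega
  have hMz : (k : ℤ) ≤ 2 * ((k / 2 : ℕ) : ℤ) + 1 := by
    have h : k ≤ 2 * (k / 2) + 1 := by omega
    exact_mod_cast h
  have hMz0 : (0:ℤ) ≤ ((k / 2 : ℕ) : ℤ) := Int.natCast_nonneg _
  intro t
  have hSS : SS k Delta t = (k : ℤ) * max (1 - t) 0 := by
    unfold SS Delta
    rw [Finset.sum_const, nsmul_eq_mul, hcard]
    have e : (0:ℤ) - t + 1 = 1 - t := by ring
    rw [e]
  have hNN : NN k Delta (t - 1) = if (0:ℤ) = t - 1 then (k:ℤ) else 0 := by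
    unfold NN Delta
    rw [Finset.sum_const, nsmul_eq_mul, hcard]
    split_ifs <;> ring
  constructor
  · rw [hSS]
    rcases le_or_gt t 0 with ht | ht
    · have hq : qq k t = ((k / 2 : ℕ) : ℤ) + (1 - t) := by
        unfold qq; omega
      rw [hq]
      have hu1 : (1:ℤ) ≤ 1 - t := by omega
      have h1 : 2 * ((k:ℤ) * max (1 - t) 0) = 2 * (k:ℤ) * (1 - t) := by
        rw [max_eq_left (by omega)]; ring
      have h2 : 2 * (k:ℤ) * (1 - t) ≤ 2 * (2 * ((k / 2 : ℕ) : ℤ) + 1) * (1 - t) := by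
        apply mul_le_mul_of_nonneg_right _ (by omega)
        omega
      have hkey : (((k / 2 : ℕ) : ℤ) + (1 - t)) * ((((k / 2 : ℕ) : ℤ) + (1 - t)) + 1)
          - 2 * (2 * ((k / 2 : ℕ) : ℤ) + 1) * (1 - t)
          = (((k / 2 : ℕ) : ℤ) - (1 - t)) * ((((k / 2 : ℕ) : ℤ) - (1 - t)) + 1) := by ring
      have h3 := consec_nonneg (((k / 2 : ℕ) : ℤ) - (1 - t))
      unfold T2
      omega
    · have hm : max (1 - t) 0 = 0 := by omega
      rw [hm, mul_zero, mul_zero]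
      exact T2_nonneg _ (qq_nonneg k t)
  · intro hN
    rw [hNN] at hN
    split_ifs at hN with h0
    · have ht1 : t = 1 := by omega
      have hM1 : (1:ℤ) ≤ ((k / 2 : ℕ) : ℤ) := by
        have hk2 : (2:ℤ) ≤ (k:ℤ) := hN
        omega
      subst ht1
      rw [hSS]
      have hm : max (1 - (1:ℤ)) 0 = 0 := by omega
      rw [hm, mul_zero, mul_zero]
      have hq : qq k 1 = ((k / 2 : ℕ) : ℤ) := by unfold qq; omega
      rw [hq]
      have hp : (1:ℤ) * 2 ≤ ((k / 2 : ℕ) : ℤ) * (((k / 2 : ℕ) : ℤ) + 1) :=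
        mul_le_mul (by omega) (by omega) (by omega) (by omega)
      unfold T2
      omega
    · omega

lemma reach_inv {n k : ℕ} {C : ℕ → ℤ} (h : LReaches n Delta C) : Inv k C := by
  induction h with
  | refl => exact inv_delta k
  | tail _ hstep ih => exact preserve hstep ih

/-- upper bound for every chip -/
lemma upper {n : ℕ} {C : ℕ → ℤ} (h : LReaches n Delta C) {k : ℕ} (h1 : 1 ≤ k) :
    C k ≤ ((k / 2 : ℕ) : ℤ) := by
  have hI : Inv k C := reach_inv h
  have hq : qq k (((k / 2 : ℕ) : ℤ) + 1) = 0 := by unfold qq; omega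
  have hu := (hI (((k / 2 : ℕ) : ℤ) + 1)).1
  rw [hq] at hu
  have hT : T2 0 = 0 := by unfold T2; ring
  rw [hT] at hu
  have hmem : k ∈ Finset.Icc 1 k := Finset.mem_Icc.2 ⟨h1, le_refl k⟩
  have hsingle : max (C k - (((k / 2 : ℕ) : ℤ) + 1) + 1) 0 ≤ SS k C (((k / 2 : ℕ) : ℤ) + 1) := by
    unfold SS
    exact Finset.single_le_sum (f := fun j => max (C j - (((k / 2 : ℕ) : ℤ) + 1) + 1) 0)
      (fun j _ => le_max_right _ _) hmem
  have hle := le_max_left (C k - (((k / 2 : ℕ) : ℤ) + 1) + 1) 0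
  omega

/-- mirrored configuration -/
def mir (n : ℕ) (C : ℕ → ℤ) : ℕ → ℤ := fun j => - C (n + 1 - j)

lemma mir_delta (n : ℕ) : mir n Delta = Delta := by
  funext j; simp [mir, Delta]

lemma mir_step {n : ℕ} {C D : ℕ → ℤ} (h : LStep n C D) : LStep n (mir n C) (mir n D) := by
  obtain ⟨a, b, ha1, hab, hbn, hCab, hDa, hDb, hoff⟩ := h
  refine ⟨n + 1 - b, n + 1 - a, by omega, by omega, by omega, ?_, ?_, ?_, ?_⟩
  · show -C (n + 1 - (n + 1 - b)) = -C (n + 1 - (n + 1 - a))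
    have e1 : n + 1 - (n + 1 - b) = b := by omega
    have e2 : n + 1 - (n + 1 - a) = a := by omega
    rw [e1, e2, hCab]
  · show -D (n + 1 - (n + 1 - b)) = -C (n + 1 - (n + 1 - b)) - 1
    have e1 : n + 1 - (n + 1 - b) = b := by omega
    rw [e1, hDb]; ring
  · show -D (n + 1 - (n + 1 - a)) = -C (n + 1 - (n + 1 - a)) + 1
    have e2 : n + 1 - (n + 1 - a) = a := by omega
    rw [e2, hDa]; ring
  · intro j hj1 hj2
    show -D (n + 1 - j) = -C (n + 1 - j)
    have hne : n + 1 - j ≠ a ∧ n + 1 - j ≠ b := by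
      constructor <;> (intro he; omega)
    rw [hoff _ hne.1 hne.2]

lemma mir_reach {n : ℕ} {C : ℕ → ℤ} (h : LReaches n Delta C) :
    LReaches n Delta (mir n C) := by
  induction h with
  | refl => rw [mir_delta]; exact Relation.ReflTransGen.refl
  | tail _ hstep ih => exact Relation.ReflTransGen.tail ih (mir_step hstep)

end ChipAux

theorem stmt_15 (n : ℕ) (C : ℕ → ℤ) (h : LReaches n Delta C) :
    ∀ k : ℕ, 1 ≤ k → k ≤ n →
      -(((n + 1 - k) / 2 : ℕ) : ℤ) ≤ C k ∧ C k ≤ ((k / 2 : ℕ) : ℤ) := by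
  intro k h1 hk
  constructor
  · have hm := ChipAux.upper (ChipAux.mir_reach h) (k := n + 1 - k) (by omega)
    have he : n + 1 - (n + 1 - k) = k := by omega
    unfold ChipAux.mir at hm
    rw [he] at hm
    omega
  · exact ChipAux.upper h h1
end

section
/- Consider the labeled chip-firing process on the one-way infinite undirected path on ℕ (edges {i, i+1}): starting from n labeled chips at vertex 0, every stabilization results in the unique stable configuration with chip (i) at vertex i−1 for 1 ≤ i ≤ n; in particular the chips end up sorted. -/
/-!
Every reachable configuration is *left-heavy*: a chip `c` at vertex `p` has at least `p - 1`
chips of smaller label at vertices `< p`. This holds trivially for the initial configuration and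
survives each firing; the only delicate case is the lesser chip `a` of a firing at `v`, whose
new vertex `v - 1` is covered either by an earlier chip already sitting at `v - 1` or by the
chips that were below `v`. In a stable configuration left-heaviness forces `D i ≤ i`, and
injectivity on `[1, n]` then pins every chip to its label by strong induction.
-/

/-- A labeled firing move on the one-way infinite path on `ℕ`:
either fire an interior vertex `v ≥ 1` (two chips at `v`, lesser label goes to `v-1`,
greater label to `v+1`), or fire vertex `0` (one chip at `0` moves to `1`). -/
def NStep (n : ℕ) (C D : ℕ → ℕ) : Prop :=
  (∃ a b v : ℕ, 1 ≤ a ∧ a < b ∧ b ≤ n ∧ 1 ≤ v ∧ C a = v ∧ C b = v ∧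
      D a = v - 1 ∧ D b = v + 1 ∧ ∀ k : ℕ, k ≠ a → k ≠ b → D k = C k) ∨
  (∃ a : ℕ, 1 ≤ a ∧ a ≤ n ∧ C a = 0 ∧ D a = 1 ∧ ∀ k : ℕ, k ≠ a → D k = C k)

def NReaches (n : ℕ) : (ℕ → ℕ) → (ℕ → ℕ) → Prop := Relation.ReflTransGen (NStep n)

/-- all chips at vertex `0` -/
def NDelta : ℕ → ℕ := fun _ => 0

/-- stable: no chip at vertex `0`, and no two chips share a vertex -/
def NStable (n : ℕ) (C : ℕ → ℕ) : Prop :=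
  (∀ a : ℕ, 1 ≤ a → a ≤ n → 1 ≤ C a) ∧
  (∀ a b : ℕ, 1 ≤ a → a < b → b ≤ n → C a ≠ C b)

def lowerCount (C : ℕ → ℕ) (c t : ℕ) : ℕ := ((Finset.Ico 1 c).filter (fun k => C k < t)).card

def LeftHeavy (C : ℕ → ℕ) : Prop := ∀ c, C c ≤ lowerCount C c (C c) + 1

lemma lowerCount_le (C : ℕ → ℕ) (c t : ℕ) : lowerCount C c t ≤ c - 1 :=
  (Finset.card_filter_le _ _).trans (Nat.card_Ico 1 c).le

lemma lowerCount_le_lowerCount {C D : ℕ → ℕ} {c c' t s : ℕ} (hc : c ≤ c')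
    (h : ∀ k, k < c → C k < t → D k < s) : lowerCount C c t ≤ lowerCount D c' s := by
  refine Finset.card_le_card fun k hk => ?_
  simp only [Finset.mem_filter, Finset.mem_Ico] at hk ⊢
  exact ⟨⟨hk.1.1, hk.1.2.trans_le hc⟩, h k hk.1.2 hk.2⟩

lemma lowerCount_lt_lowerCount {C D : ℕ → ℕ} {a c t s : ℕ} (ha : 1 ≤ a) (hac : a < c)
    (hCa : t ≤ C a) (hDa : D a < s) (h : ∀ k, k < c → C k < t → D k < s) :
    lowerCount C c t < lowerCount D c s := by
  refine Finset.card_lt_card ((Finset.ssubset_iff_of_subset fun k hk => ?_).2 ⟨a, ?_, ?_⟩)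
  · simp only [Finset.mem_filter, Finset.mem_Ico] at hk ⊢
    exact ⟨hk.1, h k hk.1.2 hk.2⟩
  · simp [ha, hac, hDa]
  · simp [hCa]

lemma LeftHeavy.of_fire_interior {C D : ℕ → ℕ} {a b v : ℕ} (hC : LeftHeavy C)
    (ha : 1 ≤ a) (hab : a < b) (hCa : C a = v) (hCb : C b = v) (hDa : D a = v - 1)
    (hDb : D b = v + 1) (hD : ∀ k, k ≠ a → k ≠ b → D k = C k) : LeftHeavy D := by
  have hb : v ≤ lowerCount D b (v + 1) := by
    have hCb' := hC b
    rw [hCb] at hCb'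
    have : lowerCount C b v < lowerCount D b (v + 1) := by
      refine lowerCount_lt_lowerCount ha hab hCa.ge (by omega) fun k hk hCk => ?_
      rcases eq_or_ne k a with rfl | hka
      · omega
      · rw [hD k hka hk.ne]; omega
    omega
  intro c
  rcases eq_or_ne c a with rfl | hca
  · rw [hDa]
    by_cases hq : ∃ q < c, C q = v - 1
    · -- an earlier chip `q` at `v - 1` already has the required chips below it
      obtain ⟨q, hqc, hCq⟩ := hq
      have hCq' := hC q
      rw [hCq] at hCq'
      have : lowerCount C q (v - 1) ≤ lowerCount D c (v - 1) :=
        lowerCount_le_lowerCount hqc.le fun k hk hCk => by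
          rwa [hD k (by omega) (by omega)]
      omega
    · push Not at hq
      have hCc := hC c
      have : lowerCount C c v ≤ lowerCount D c (v - 1) :=
        lowerCount_le_lowerCount le_rfl fun k hk hCk => by
          have := hq k hk
          rw [hD k hk.ne (by omega)]
          omega
      rw [hCa] at hCc
      omega
  rcases eq_or_ne c b with rfl | hcb
  · rw [hDb]; omega
  rw [hD c hca hcb]
  by_cases hcrit : b < c ∧ C c = v + 1
  · have : lowerCount D b (v + 1) ≤ lowerCount D c (v + 1) :=
      lowerCount_le_lowerCount hcrit.1.le fun k _ hk => hk
    rw [hcrit.2]; omega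
  · have hCc := hC c
    have : lowerCount C c (C c) ≤ lowerCount D c (C c) :=
      lowerCount_le_lowerCount le_rfl fun k hk hCk => by
        rcases eq_or_ne k a with rfl | hka
        · omega
        rcases eq_or_ne k b with rfl | hkb
        · omega
        rwa [hD k hka hkb]
    omega

lemma LeftHeavy.of_fire_zero {C D : ℕ → ℕ} {a : ℕ} (hC : LeftHeavy C) (hDa : D a = 1)
    (hD : ∀ k, k ≠ a → D k = C k) : LeftHeavy D := by
  intro c
  rcases Nat.lt_or_ge (D c) 2 with hc | hc
  · omega
  have hca : c ≠ a := by rintro rfl; omega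
  have hCc := hC c
  have : lowerCount C c (C c) ≤ lowerCount D c (C c) :=
    lowerCount_le_lowerCount le_rfl fun k _ hCk => by
      rcases eq_or_ne k a with rfl | hka
      · rw [hD c hca] at hc; omega
      · rwa [hD k hka]
  rw [hD c hca]; omega

lemma LeftHeavy.of_step {n : ℕ} {C D : ℕ → ℕ} (hC : LeftHeavy C) (hs : NStep n C D) :
    LeftHeavy D := by
  rcases hs with ⟨a, b, v, ha, hab, -, -, hCa, hCb, hDa, hDb, hD⟩ | ⟨a, -, -, -, hDa, hD⟩
  · exact hC.of_fire_interior ha hab hCa hCb hDa hDb hD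
  · exact hC.of_fire_zero hDa hD

lemma LeftHeavy.of_reaches {n : ℕ} {C D : ℕ → ℕ} (hC : LeftHeavy C) (h : NReaches n C D) :
    LeftHeavy D := by
  induction h with
  | refl => exact hC
  | tail _ hs ih => exact ih.of_step hs

lemma leftHeavy_nDelta : LeftHeavy NDelta := fun _ => by simp [NDelta]

lemma LeftHeavy.le_self {C : ℕ → ℕ} (hC : LeftHeavy C) {i : ℕ} (hi : 1 ≤ i) : C i ≤ i := by
  have := hC i
  have := lowerCount_le C i (C i)
  omega

lemma NStable.eq_self_of_le {n : ℕ} {D : ℕ → ℕ} (hD : NStable n D)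
    (hle : ∀ i, 1 ≤ i → i ≤ n → D i ≤ i) : ∀ i, 1 ≤ i → i ≤ n → D i = i := by
  intro i
  induction i using Nat.strong_induction_on with
  | _ i ih =>
    intro hi hin
    by_contra hne
    have hlt : D i < i := (hle i hi hin).lt_of_ne hne
    have hpos : 1 ≤ D i := hD.1 i hi hin
    exact hD.2 (D i) i hpos hlt hin (ih (D i) hlt hpos (by omega))

theorem stmt_18 (n : ℕ) (D : ℕ → ℕ) (h : NReaches n NDelta D) (hD : NStable n D) :
    ∀ i : ℕ, 1 ≤ i → i ≤ n → D i = i := by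
  have hL : LeftHeavy D := leftHeavy_nDelta.of_reaches h
  exact hD.eq_self_of_le fun i hi _ => hL.le_self hi
end
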